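/- arXiv:1412.1726 — 5 statements merged into one kernel-verified Lean document; each statement's English description precedes it below -/
import Mathlib

section
/- Let d ≥ 3 and let W be the d×d matrix over the Laurent polynomial ring Z[x^{±1}, q_1^{±1},...,q_d^{±1}] with entries W_{i,j} = (∏_{s=i}^{j-1} q_s) x^{j-i-1} for i < j, W_{i,i} = 0, and W_{i,j} = (∏_{s=i}^{d} q_s)(∏_{s=1}^{j-1} q_s) x^{d-(i-j)-1} for i > j. Then det W = (-1)^{d-1} ε ∑_{j=0}^{d-2} (ε x^d)^j, where ε = ∏_{i=1}^d q_i. -/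
/-!
Let `f m = walkWeight x q m` be the weight of the counterclockwise walk of `m` steps from
vertex `0`, every step contributing `x` and the weight of its edge. Then
`f i * (x * W i j) = C i j * f j`, where `C` has zeros on the diagonal, ones above it and
`c = ε x^d` below it: a walk from `i` past vertex `0` to `j` is a full turn, of weight `c`,
followed by the walk from `0` to `j`. As the `f i` are units, `x^d det W = det C`.
With `S` the subdiagonal shift, `C (1 - S) = (1 - c S) U` for an upper triangular `U` with
diagonal `(-1, …, -1, c (1 + c + ⋯ + c^(d-2)))`, whence `det C = (-1)^(d-1) c ∑_{j<d-1} c^j`.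
-/

/-- The Laurent polynomial ring `ℤ[x^{±1}, q_1^{±1}, …, q_d^{±1}]`, realized as the
monoid algebra of `ℤ`-valued exponent vectors; the variable `none` is `x` and
`some s` is `q_s`. -/
noncomputable def LaurentVar (d : ℕ) (s : Option (Fin d)) :
    AddMonoidAlgebra ℤ (Option (Fin d) →₀ ℤ) :=
  AddMonoidAlgebra.single (Finsupp.single s 1) 1

open Finset Matrix

lemma AddMonoidAlgebra.isUnit_single_one {k G : Type*} [CommSemiring k] [AddCommGroup G] (g : G) :
    IsUnit (single g (1 : k)) :=
  .of_mul_eq_one (single (-g) 1) (by rw [single_mul_single, add_neg_cancel, mul_one]; rfl)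

variable {R : Type*} [CommRing R]

namespace Matrix

variable (R) in
def subdiagShift (n : ℕ) : Matrix (Fin n) (Fin n) R :=
  of fun i k => if (i : ℕ) = k + 1 then 1 else 0

lemma det_one_sub_smul_subdiagShift (n : ℕ) (a : R) : det (1 - a • subdiagShift R n) = 1 := by
  rw [det_of_isLowerTriangular]
  · simp [subdiagShift]
  · intro i j (hij : i < j)
    have : (i : ℕ) ≠ j + 1 := by omega
    simp [subdiagShift, one_apply_ne hij.ne, this]

lemma mul_subdiagShift_apply {n : ℕ} (A : Matrix (Fin n) (Fin n) R) (i j : Fin n) :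
    (A * subdiagShift R n) i j = if h : (j : ℕ) + 1 < n then A i ⟨j + 1, h⟩ else 0 := by
  rw [mul_apply]
  split_ifs with h
  · rw [sum_eq_single ⟨j + 1, h⟩] <;> simp +contextual [subdiagShift, Fin.ext_iff]
  · exact sum_eq_zero fun k _ => by simp [subdiagShift, show (k : ℕ) ≠ j + 1 by omega]

lemma subdiagShift_mul_apply {n : ℕ} (A : Matrix (Fin n) (Fin n) R) (i j : Fin n) :
    (subdiagShift R n * A) i j = if h : 0 < (i : ℕ) then A ⟨i - 1, by omega⟩ j else 0 := by
  rw [mul_apply]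
  split_ifs with h
  · rw [sum_eq_single ⟨i - 1, by omega⟩ (fun k _ hk => ?_) (by simp)]
    · simp [subdiagShift, Nat.sub_add_cancel h]
    · have : (i : ℕ) ≠ k + 1 := fun hik => hk (Fin.ext (by simp [hik]))
      simp [subdiagShift, this]
  · exact sum_eq_zero fun k _ => by simp [subdiagShift, show (i : ℕ) ≠ k + 1 by omega]

def twistedOffDiagOnes (n : ℕ) (c : R) : Matrix (Fin n) (Fin n) R :=
  of fun i j => if i < j then 1 else if i = j then 0 else c

def twistedOffDiagOnesUpperFactor (n : ℕ) (c : R) : Matrix (Fin n) (Fin n) R :=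
  of fun i j =>
    if (j : ℕ) + 1 = n then
      if (i : ℕ) + 1 = n then c * ∑ l ∈ range i, c ^ l else ∑ l ∈ range (i + 1), c ^ l
    else if i = j then -1 else 0

lemma twistedOffDiagOnes_mul_one_sub_subdiagShift (n : ℕ) (c : R) :
    twistedOffDiagOnes n c * (1 - subdiagShift R n) =
      (1 - c • subdiagShift R n) * twistedOffDiagOnesUpperFactor n c := by
  ext ⟨_ | i, hi⟩ ⟨j, hj⟩ <;>
    simp only [mul_sub, sub_mul, mul_one, one_mul, sub_apply, mul_subdiagShift_apply, smul_mul,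
      Matrix.smul_apply, subdiagShift_mul_apply, twistedOffDiagOnes, twistedOffDiagOnesUpperFactor,
      of_apply, Fin.mk_lt_mk, Fin.mk.injEq, smul_eq_mul] <;>
    split_ifs <;> first | omega | simp [geom_sum_succ]

lemma det_twistedOffDiagOnesUpperFactor (n : ℕ) (c : R) :
    det (twistedOffDiagOnesUpperFactor (n + 1) c) = (-1) ^ n * c * ∑ j ∈ range n, c ^ j := by
  rw [det_of_isUpperTriangular, Fin.prod_univ_castSucc]
  · simp [twistedOffDiagOnesUpperFactor, mul_assoc, Nat.ne_of_lt]
  · intro i j (hji : j < i)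
    have : (j : ℕ) ≠ n := by omega
    simp [twistedOffDiagOnesUpperFactor, this, hji.ne']

lemma det_twistedOffDiagOnes (n : ℕ) [NeZero n] (c : R) :
    det (twistedOffDiagOnes n c) = (-1) ^ (n - 1) * c * ∑ j ∈ range (n - 1), c ^ j := by
  obtain ⟨m, rfl⟩ := Nat.exists_eq_succ_of_ne_zero (NeZero.ne n)
  have h := congrArg det (twistedOffDiagOnes_mul_one_sub_subdiagShift (m + 1) c)
  rw [det_mul, det_mul, det_one_sub_smul_subdiagShift, ← one_smul R (subdiagShift R (m + 1)),
    det_one_sub_smul_subdiagShift, mul_one, one_mul, det_twistedOffDiagOnesUpperFactor] at h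
  simpa using h

end Matrix

section Polygon

variable {d : ℕ} [NeZero d]

def polygonWeightMatrix (x : R) (q : Fin d → R) : Matrix (Fin d) (Fin d) R :=
  of fun i j => if i = j then 0
    else (∏ t : Fin ((j - i).val), q (i + Fin.ofNat d (t : ℕ))) * x ^ ((j - i).val - 1)

def walkWeight (x : R) (q : Fin d → R) (m : ℕ) : R :=
  ∏ l ∈ range m, x * q (Fin.ofNat d l)

lemma walkWeight_add (x : R) (q : Fin d → R) (i : Fin d) (k : ℕ) :
    walkWeight x q (i + k) = walkWeight x q i * (x ^ k * ∏ t : Fin k, q (i + Fin.ofNat d t)) := by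
  simp only [walkWeight, prod_range_add, ← Fin.add_ofNat]
  rw [← Fin.prod_univ_eq_prod_range (fun l => x * q (i + Fin.ofNat d l))]
  simp [prod_mul_distrib]

lemma walkWeight_add_period (x : R) (q : Fin d → R) (m : ℕ) :
    walkWeight x q (d + m) = walkWeight x q d * walkWeight x q m := by
  have hper (l : ℕ) : Fin.ofNat d (d + l) = Fin.ofNat d l := by ext; simp
  simp only [walkWeight, prod_range_add, hper]

lemma walkWeight_period (x : R) (q : Fin d → R) :
    walkWeight x q d = (∏ s, q s) * x ^ d := by
  rw [walkWeight, ← Fin.prod_univ_eq_prod_range (fun l => x * q (Fin.ofNat d l)),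
    prod_mul_distrib]
  simp [mul_comm]

lemma walkWeight_mul_polygonWeightMatrix_of_ne (x : R) (q : Fin d → R) {i j : Fin d}
    (h : i ≠ j) :
    walkWeight x q i * (x * polygonWeightMatrix x q i j) =
      walkWeight x q (i + (j - i : Fin d).val) := by
  have hk : (j - i : Fin d).val ≠ 0 := Fin.val_ne_zero_iff.mpr (sub_ne_zero.mpr h.symm)
  rw [walkWeight_add, polygonWeightMatrix, of_apply, if_neg h, ← mul_pow_sub_one hk x]
  ring

lemma walkWeight_mul_polygonWeightMatrix (x : R) (q : Fin d → R) (i j : Fin d) :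
    walkWeight x q i * (x * polygonWeightMatrix x q i j) =
      twistedOffDiagOnes d ((∏ s, q s) * x ^ d) i j * walkWeight x q j := by
  rcases lt_trichotomy i j with h | rfl | h
  · rw [walkWeight_mul_polygonWeightMatrix_of_ne x q h.ne, Fin.coe_sub_iff_le.mpr h.le,
      Nat.add_sub_cancel' h.le, twistedOffDiagOnes, of_apply, if_pos h, one_mul]
  · simp [polygonWeightMatrix, twistedOffDiagOnes]
  · rw [walkWeight_mul_polygonWeightMatrix_of_ne x q h.ne', Fin.coe_sub_iff_lt.mpr h,
      twistedOffDiagOnes, of_apply, if_neg (not_lt_of_gt h), if_neg h.ne', ← walkWeight_period,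
      ← walkWeight_add_period]
    congr 1
    omega

lemma diagonal_walkWeight_mul_smul_polygonWeightMatrix (x : R) (q : Fin d → R) :
    diagonal (fun i : Fin d => walkWeight x q i) * (x • polygonWeightMatrix x q) =
      twistedOffDiagOnes d ((∏ s, q s) * x ^ d) *
        diagonal (fun i : Fin d => walkWeight x q i) := by
  ext i j
  rw [diagonal_mul, mul_diagonal, Matrix.smul_apply, smul_eq_mul,
    walkWeight_mul_polygonWeightMatrix]

theorem det_polygonWeightMatrix (x : R) (q : Fin d → R) (hx : IsUnit x)
    (hq : ∀ s, IsUnit (q s)) :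
    det (polygonWeightMatrix x q) =
      (-1) ^ (d - 1) * (∏ s, q s) * ∑ j ∈ range (d - 1), ((∏ s, q s) * x ^ d) ^ j := by
  have hD : IsUnit (det (diagonal fun i : Fin d => walkWeight x q i)) := by
    simp [walkWeight, hx, hq]
  have h := congrArg det (diagonal_walkWeight_mul_smul_polygonWeightMatrix x q)
  rw [det_mul, det_mul, det_smul, Fintype.card_fin, mul_comm (det (twistedOffDiagOnes _ _)),
    det_twistedOffDiagOnes, hD.mul_right_inj] at h
  rw [← (hx.pow d).mul_right_inj, h]
  ring

end Polygon

theorem polygon_weight_matrix_det_general (d : ℕ) [NeZero d]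
    (x : AddMonoidAlgebra ℤ (Option (Fin d) →₀ ℤ))
    (q : Fin d → AddMonoidAlgebra ℤ (Option (Fin d) →₀ ℤ))
    (hx : x = LaurentVar d none) (hq : ∀ s, q s = LaurentVar d (some s))
    (W : Matrix (Fin d) (Fin d) (AddMonoidAlgebra ℤ (Option (Fin d) →₀ ℤ)))
    (hW : ∀ i j : Fin d, W i j =
      if i = j then 0
      else (∏ t : Fin ((j - i).val), q (i + Fin.ofNat d (t : ℕ))) * x ^ ((j - i).val - 1)) :
    W.det = (-1) ^ (d - 1) * (∏ s : Fin d, q s) *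
      ∑ j ∈ Finset.range (d - 1), ((∏ s : Fin d, q s) * x ^ d) ^ j := by
  rw [show W = polygonWeightMatrix x q from Matrix.ext hW]
  exact det_polygonWeightMatrix x q (hx ▸ AddMonoidAlgebra.isUnit_single_one _)
    fun s => hq s ▸ AddMonoidAlgebra.isUnit_single_one _

/-- **Determinant of the weight matrix of an undissected edge-weighted `d`-gon.**
Let `d ≥ 3` and let `W` be the `d×d` matrix over the Laurent polynomial ring
`ℤ[x^{±1}, q_1^{±1}, …, q_d^{±1}]` whose `(i,j)` entry, for `i ≠ j`, is
`(∏_{s} q_s) * x^(k-1)` where the product runs over the `k = (j - i) mod d` edges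
`e_i, e_{i+1}, …, e_{j-1}` (indices mod `d`) traversed counterclockwise from `i` to
`j`, and whose diagonal entries are `0`; this unifies the three cases
`W i j = (∏_{s=i}^{j-1} q_s) x^(j-i-1)` for `i < j`, `W i i = 0` and
`W i j = (∏_{s=i}^{d} q_s)(∏_{s=1}^{j-1} q_s) x^(d-(i-j)-1)` for `i > j`.
Then `det W = (-1)^(d-1) * ε * ∑_{j=0}^{d-2} (ε x^d)^j` where `ε = ∏_{i=1}^d q_i`. -/
theorem polygon_weight_matrix_det (d : ℕ) (hd : 3 ≤ d) [NeZero d]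
    (x : AddMonoidAlgebra ℤ (Option (Fin d) →₀ ℤ))
    (q : Fin d → AddMonoidAlgebra ℤ (Option (Fin d) →₀ ℤ))
    (hx : x = LaurentVar d none) (hq : ∀ s, q s = LaurentVar d (some s))
    (W : Matrix (Fin d) (Fin d) (AddMonoidAlgebra ℤ (Option (Fin d) →₀ ℤ)))
    (hW : ∀ i j : Fin d, W i j =
      if i = j then 0
      else (∏ t : Fin ((j - i).val), q (i + Fin.ofNat d (t : ℕ))) * x ^ ((j - i).val - 1)) :
    W.det = (-1) ^ (d - 1) * (∏ s : Fin d, q s) *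
      ∑ j ∈ Finset.range (d - 1), ((∏ s : Fin d, q s) * x ^ d) ^ j :=
  polygon_weight_matrix_det_general d x q hx hq W hW
end

section
/- Let d ≥ 3 and let C be the d×d matrix over Z[x] with entries C_{i,j} = x^{(j-i-1) mod d} for i ≠ j and C_{i,i} = 0, i.e., the circulant matrix with first row (0, 1, x, x^2, ..., x^{d-2}). Then det C = (-1)^{d-1} ∑_{j=0}^{d-2} x^{dj}. -/
open Polynomial

lemma aux_det {R : Type*} [CommRing R] (n : ℕ) (a b c : R)
    (A : Matrix (Fin (n+1)) (Fin (n+1)) R)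
    (hA : ∀ i j : Fin (n+1), A i j =
      if (i : ℕ) < n then
        (if (j : ℕ) = (i : ℕ) then a else if (j : ℕ) = (i : ℕ) + 1 then 1 else 0)
      else c * b ^ (j : ℕ)) :
    A.det = c * ∑ j ∈ Finset.range (n+1), (-1) ^ (n - j) * (a * b) ^ j := by
  induction n generalizing c with
  | zero =>
    rw [Matrix.det_fin_one, hA]
    simp
  | succ n ih =>
    rw [Matrix.det_succ_column_zero, Fin.sum_univ_succ]
    have hlast : ∑ i : Fin (n+1), (-1 : R) ^ ((i.succ : ℕ)) * A i.succ 0 *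
        (A.submatrix i.succ.succAbove Fin.succ).det
        = (-1) ^ (n+1) * c *
          (A.submatrix (Fin.last (n+1)).succAbove Fin.succ).det := by
      rw [Finset.sum_eq_single (Fin.last n)]
      · have : (Fin.last n).succ = Fin.last (n+1) := rfl
        rw [this, hA]
        simp [Fin.last]
      · intro i _ hi
        have h1 : (i.succ : ℕ) < n + 1 := by
          have := i.isLt
          have : (i : ℕ) ≠ n := fun h => hi (Fin.ext h)
          simp [Fin.succ]; omega
        rw [hA]
        simp only [h1, if_pos]
        have h2 : ¬ ((0:ℕ) = (i.succ : ℕ)) := by simp [Fin.succ]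
        have h3 : ¬ ((0:ℕ) = (i.succ : ℕ) + 1) := by simp [Fin.succ]
        simp only [Fin.val_zero, h2, h3, if_false]
        ring
      · simp
    rw [hlast]
    -- the i = 0 term
    have h00 : A 0 0 = a := by rw [hA]; simp
    have hM0 : (A.submatrix (Fin.succAbove 0) Fin.succ).det
        = (c * b) * ∑ j ∈ Finset.range (n+1), (-1) ^ (n - j) * (a * b) ^ j := by
      apply ih
      intro i j
      simp only [Matrix.submatrix_apply, Fin.zero_succAbove]
      rw [hA]
      have hi : ((i.succ : ℕ) < n + 1) ↔ ((i:ℕ) < n) := by simp [Fin.succ]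
      by_cases h : (i : ℕ) < n
      · rw [if_pos (hi.mpr h), if_pos h]
        have e1 : ((j.succ : ℕ) = (i.succ : ℕ)) ↔ ((j:ℕ) = (i:ℕ)) := by simp [Fin.succ]
        have e2 : ((j.succ : ℕ) = (i.succ : ℕ) + 1) ↔ ((j:ℕ) = (i:ℕ) + 1) := by
          simp [Fin.succ]
        by_cases h1 : (j:ℕ) = (i:ℕ)
        · rw [if_pos (e1.mpr h1), if_pos h1]
        · rw [if_neg (fun hh => h1 (e1.mp hh)), if_neg h1]
          by_cases h2 : (j:ℕ) = (i:ℕ)+1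
          · rw [if_pos (e2.mpr h2), if_pos h2]
          · rw [if_neg (fun hh => h2 (e2.mp hh)), if_neg h2]
      · rw [if_neg (fun hh => h (hi.mp hh)), if_neg h]
        rw [Fin.val_succ, pow_succ]
        ring
    -- the lower-triangular minor
    have hMlast : (A.submatrix (Fin.last (n+1)).succAbove Fin.succ).det = 1 := by
      rw [Fin.succAbove_last]
      rw [Matrix.det_of_lowerTriangular]
      · apply Finset.prod_eq_one
        intro i _
        simp only [Matrix.submatrix_apply, hA, Fin.coe_castSucc, Fin.val_succ]
        simp [i.isLt]
      · intro i j hij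
        have hlt' : (i:ℕ) < (j:ℕ) := hij
        simp only [Matrix.submatrix_apply, hA, Fin.coe_castSucc, Fin.val_succ]
        rw [if_pos i.isLt, if_neg (by omega), if_neg (by omega)]
    rw [hM0, hMlast, h00, Fin.val_zero, pow_zero, one_mul, mul_one]
    rw [Finset.sum_range_succ' (fun j => (-1:R) ^ (n + 1 - j) * (a*b)^j)]
    simp only [Nat.succ_sub_succ, pow_zero, Nat.sub_zero, mul_one]
    simp only [mul_add, Finset.mul_sum]
    congr 1
    · apply Finset.sum_congr rfl
      intro j _
      ring
    · ring

/-- **Circulant determinant.**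
Let `d ≥ 3` and let `C` be the `d×d` circulant matrix over `ℤ[x]` with first row
`(0, 1, x, x², …, x^{d-2})`, i.e. `C i j = x^((j-i-1) mod d)` for `i ≠ j` and `C i i = 0`.
Then `det C = (-1)^(d-1) * ∑_{j=0}^{d-2} x^(d*j)`. -/
theorem circulant_det (d : ℕ) (hd : 3 ≤ d)
    (C : Matrix (Fin d) (Fin d) (Polynomial ℤ))
    (hC : ∀ i j : Fin d, C i j =
      if i = j then 0 else Polynomial.X ^ ((j.val + d - i.val - 1) % d)) :
    C.det = (-1) ^ (d - 1) * ∑ j ∈ Finset.range (d - 1), Polynomial.X ^ (d * j) := by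
  obtain ⟨n, rfl⟩ : ∃ n, d = n + 3 := ⟨d - 3, by omega⟩
  set L : Matrix (Fin (n+3)) (Fin (n+3)) (Polynomial ℤ) := fun i j =>
    if j = i then 1 else if (j : ℕ) = (i : ℕ) + 1 then -X else 0 with hL
  have hdetL : L.det = 1 := by
    rw [Matrix.det_of_upperTriangular]
    · apply Finset.prod_eq_one
      intro i _
      simp [hL]
    · intro i j hij
      have hij' : (j : ℕ) < (i : ℕ) := hij
      simp only [hL]
      rw [if_neg (by exact fun h => by simp [h] at hij'), if_neg (by omega)]
  -- the entries of L * C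
  have hE : ∀ i j : Fin (n+3), (L * C) i j =
      if (i : ℕ) < n + 2 then
        (if (j : ℕ) = (i : ℕ) then -(X ^ (n+2)) else if (j : ℕ) = (i : ℕ) + 1 then 1 else 0)
      else C i j := by
    intro i j
    rw [Matrix.mul_apply]
    by_cases hi : (i : ℕ) < n + 2
    · obtain ⟨i', hi'v⟩ : ∃ i' : Fin (n+3), (i' : ℕ) = (i : ℕ) + 1 :=
        ⟨⟨(i : ℕ) + 1, by omega⟩, rfl⟩
      have hne : i ≠ i' := by
        intro h
        have : (i : ℕ) = (i' : ℕ) := congrArg Fin.val h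
        omega
      rw [Finset.sum_eq_add_of_mem i i' (Finset.mem_univ _) (Finset.mem_univ _) hne]
      · have hLii : L i i = 1 := by simp [hL]
        have hLii' : L i i' = -X := by
          simp only [hL]
          rw [if_neg (fun h => hne h.symm), if_pos hi'v]
        rw [hLii, hLii', one_mul, if_pos hi]
        have hjv : (j : ℕ) < n + 3 := j.isLt
        by_cases hj1 : (j : ℕ) = (i : ℕ)
        · have hji : j = i := Fin.ext hj1
          rw [if_pos hj1, hC, hC, if_pos hji.symm,
            if_neg (fun h => by have := congrArg Fin.val h; omega)]
          have : ((j : ℕ) + (n + 3) - (i' : ℕ) - 1) % (n + 3) = n + 1 := by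
            have h5 : (j : ℕ) + (n + 3) - (i' : ℕ) - 1 = n + 1 := by omega
            rw [h5, Nat.mod_eq_of_lt (by omega)]
          rw [this, pow_succ]
          ring
        · rw [if_neg hj1]
          by_cases hj2 : (j : ℕ) = (i : ℕ) + 1
          · have hji' : i' = j := Fin.ext (by omega)
            rw [if_pos hj2, hC, hC,
              if_neg (fun h => by have := congrArg Fin.val h; omega),
              if_pos hji']
            have : ((j : ℕ) + (n + 3) - (i : ℕ) - 1) % (n + 3) = 0 := by
              have h5 : (j : ℕ) + (n + 3) - (i : ℕ) - 1 = n + 3 := by omega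
              rw [h5, Nat.mod_self]
            rw [this, pow_zero]
            ring
          · rw [if_neg hj2, hC, hC,
              if_neg (fun h => by have := congrArg Fin.val h; omega),
              if_neg (fun h => by have := congrArg Fin.val h; omega)]
            have e2 : ((j : ℕ) + (n + 3) - (i : ℕ) - 1) % (n + 3)
                = ((j : ℕ) + (n + 3) - (i' : ℕ) - 1) % (n + 3) + 1 := by
              rcases lt_or_gt_of_ne (show (j : ℕ) ≠ (i : ℕ) from hj1) with hlt | hgt
              · rw [Nat.mod_eq_of_lt (by omega), Nat.mod_eq_of_lt (by omega)]
                omega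
              · have hgt2 : (i : ℕ) + 2 ≤ (j : ℕ) := by omega
                have hA : (j : ℕ) + (n+3) - (i : ℕ) - 1
                    = ((j : ℕ) - (i : ℕ) - 1) + (n+3) := by omega
                have hB : (j : ℕ) + (n+3) - (i' : ℕ) - 1
                    = ((j : ℕ) - (i' : ℕ) - 1) + (n+3) := by omega
                rw [hA, hB, Nat.add_mod_right, Nat.add_mod_right,
                  Nat.mod_eq_of_lt (by omega), Nat.mod_eq_of_lt (by omega)]
                omega
            rw [e2, pow_succ]
            ring
      · intro k _ hk
        obtain ⟨hk1, hk2⟩ := hk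
        have hz : L i k = 0 := by
          simp only [hL]
          rw [if_neg (fun h => hk1 (by rw [h])),
            if_neg (fun h => hk2 (Fin.ext (by omega)))]
        rw [hz, zero_mul]
    · rw [if_neg hi]
      rw [Finset.sum_eq_single i]
      · simp [hL]
      · intro k _ hk
        have hz : L i k = 0 := by
          simp only [hL]
          rw [if_neg hk, if_neg (by have := k.isLt; omega)]
        rw [hz, zero_mul]
      · simp
  -- determinant of L * C via expansion along the last column
  have hdetE : (L * C).det = (-1 : Polynomial ℤ) ^ ((n + 1) + (n + 2)) *
      ((L * C).submatrix ((⟨n+1, by omega⟩ : Fin (n+3)).succAbove)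
        (Fin.last (n+2)).succAbove).det := by
    rw [Matrix.det_succ_column (L * C) (Fin.last (n+2))]
    rw [Finset.sum_eq_single (⟨n+1, by omega⟩ : Fin (n+3))]
    · rw [hE]
      have h1 : ((⟨n+1, by omega⟩ : Fin (n+3)) : ℕ) < n + 2 := by simp
      rw [if_pos h1]
      have h2 : ((Fin.last (n+2) : Fin (n+3)) : ℕ) = n + 2 := rfl
      rw [h2, if_neg (by simp), if_pos (by simp)]
      simp [Fin.val_last]
    · intro k _ hk
      have hkval : (k : ℕ) ≠ n + 1 := fun h => hk (Fin.ext h)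
      have hEk : (L * C) k (Fin.last (n+2)) = 0 := by
        rw [hE]
        by_cases hklt : (k : ℕ) < n + 2
        · rw [if_pos hklt,
            if_neg (by simp only [Fin.val_last]; omega),
            if_neg (by simp only [Fin.val_last]; omega)]
        · rw [if_neg hklt, hC,
            if_pos (Fin.ext (by have := k.isLt; simp only [Fin.val_last]; omega))]
      rw [hEk]
      ring
    · simp
  -- identify the submatrix with the aux pattern
  have hsub : ((L * C).submatrix ((⟨n+1, by omega⟩ : Fin (n+3)).succAbove)
        (Fin.last (n+2)).succAbove).det
      = 1 * ∑ j ∈ Finset.range (n+2),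
          (-1) ^ (n + 1 - j) * ((-(X ^ (n+2))) * X) ^ j := by
    apply aux_det (n+1) (-(X ^ (n+2))) X 1
    intro i j
    rw [Fin.succAbove_last, Matrix.submatrix_apply]
    by_cases hi : (i : ℕ) < n + 1
    · have hrow : (⟨n+1, by omega⟩ : Fin (n+3)).succAbove i = i.castSucc := by
        apply Fin.succAbove_of_castSucc_lt
        exact hi
      rw [hrow, hE, if_pos (by simp only [Fin.coe_castSucc]; omega), if_pos hi]
      simp only [Fin.coe_castSucc]
    · have hi1 : (i : ℕ) = n + 1 := by have := i.isLt; omega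
      have hrow : (⟨n+1, by omega⟩ : Fin (n+3)).succAbove i = i.succ := by
        apply Fin.succAbove_of_le_castSucc
        rw [Fin.le_def]
        simp [hi1]
      have hjv : (j : ℕ) < n + 2 := j.isLt
      rw [hrow, hE, if_neg (by simp only [Fin.val_succ]; omega), if_neg hi, hC,
        if_neg (fun h => by
          have := congrArg Fin.val h
          simp only [Fin.val_succ, Fin.coe_castSucc] at this
          omega)]
      have hmod : (((j.castSucc : Fin (n+3)) : ℕ) + (n + 3)
          - ((i.succ : Fin (n+3)) : ℕ) - 1) % (n + 3) = (j : ℕ) := by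
        simp only [Fin.coe_castSucc, Fin.val_succ]
        have h5 : (j : ℕ) + (n + 3) - ((i : ℕ) + 1) - 1 = (j : ℕ) := by omega
        rw [h5, Nat.mod_eq_of_lt (by omega)]
      rw [hmod, one_mul]
  -- put everything together
  have hdetC : C.det = (L * C).det := by
    rw [Matrix.det_mul, hdetL, one_mul]
  rw [hdetC, hdetE, hsub, one_mul]
  have hd1 : n + 3 - 1 = n + 2 := rfl
  rw [hd1, Finset.mul_sum, Finset.mul_sum]
  apply Finset.sum_congr rfl
  intro j hj
  have hjle : j ≤ n + 1 := by
    have := Finset.mem_range.mp hj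
    omega
  have e1 : ((-(X ^ (n+2)) : Polynomial ℤ) * X) ^ j
      = (-1 : Polynomial ℤ) ^ j * X ^ ((n+3) * j) := by
    have h : ((-(X ^ (n+2)) : Polynomial ℤ) * X) = -(X ^ (n+3)) := by
      rw [pow_succ]
      ring
    rw [h, neg_pow, ← pow_mul]
  rw [e1]
  have e2 : (-1 : Polynomial ℤ) ^ ((n+1)+(n+2)) *
        ((-1 : Polynomial ℤ) ^ (n + 1 - j) * ((-1 : Polynomial ℤ) ^ j * X ^ ((n+3) * j)))
      = ((-1 : Polynomial ℤ) ^ ((n+1)+(n+2)) * ((-1 : Polynomial ℤ) ^ ((n + 1 - j) + j)))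
        * X ^ ((n+3) * j) := by
    rw [pow_add (-1 : Polynomial ℤ) (n+1-j) j]
    ring
  rw [e2]
  have e3 : (n + 1 - j) + j = n + 1 := by omega
  rw [e3]
  have e4 : (-1 : Polynomial ℤ) ^ ((n+1)+(n+2)) * (-1 : Polynomial ℤ) ^ (n+1)
      = (-1 : Polynomial ℤ) ^ (n + 2) := by
    rw [← pow_add]
    have h : (n+1)+(n+2)+(n+1) = n + 2 + 2 * (n + 1) := by omega
    rw [h, pow_add, pow_mul]
    simp
  rw [e4]
end

section
/- Let R be a commutative ring, s ∈ ℕ with s ≥ 1, y ∈ R, and let u_1, ..., u_{s-1} be units in R. Let U be the s×s matrix with entries U_{i,i} = 1 + y, U_{i,j} = (∏_{k=i}^{j-1} u_k) y for i < j, and U_{i,j} = (∏_{k=j}^{i-1} u_k)^{-1} for i > j. Then det U = ∑_{j=0}^{s} y^j. -/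
namespace UnitMatrixDetAux
open Matrix Finset

variable {R : Type*} [CommRing R]

/-- The "unit-free" matrix: `1 + y` on the diagonal, `y` above, `1` below. -/
def MM (n : ℕ) (y : R) : Matrix (Fin n) (Fin n) R :=
  Matrix.of fun i j => if i = j then 1 + y else if (i : ℕ) < (j : ℕ) then y else 1

/-- Lower-triangular matrix with `y^(i-j)` at `(i,j)` for `j ≤ i`. -/
def FF (n : ℕ) (y : R) : Matrix (Fin n) (Fin n) R :=
  Matrix.of fun i j => if (j : ℕ) ≤ (i : ℕ) then y ^ ((i : ℕ) - (j : ℕ)) else 0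

/-- Column-operation matrix: `1` on the diagonal, `-1` just below. -/
def EE (n : ℕ) : Matrix (Fin n) (Fin n) R :=
  Matrix.of fun i j => if i = j then 1 else if (i : ℕ) = (j : ℕ) + 1 then -1 else 0

/-- Intermediate matrix `MM * EE`. -/
def BB (n : ℕ) (y : R) : Matrix (Fin n) (Fin n) R :=
  Matrix.of fun i j => if (j : ℕ) + 1 = n then (if i = j then 1 + y else y)
    else if i = j then 1 else if (i : ℕ) = (j : ℕ) + 1 then -y else 0

/-- Final upper-triangular matrix `FF * MM * EE`. -/
def VV (n : ℕ) (y : R) : Matrix (Fin n) (Fin n) R :=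
  Matrix.of fun i j => if (j : ℕ) + 1 = n then
      (if i = j then ∑ m ∈ range (n + 1), y ^ m else ∑ m ∈ range ((i : ℕ) + 1), y ^ (m + 1))
    else if i = j then 1 else 0

lemma ME (n : ℕ) (y : R) : MM n y * EE n = BB n y := by
  ext i j
  rw [Matrix.mul_apply]
  have hsummand : ∀ k : Fin n, MM n y i k * EE n k j
      = (if k = j then MM n y i k else 0)
        + (if (k : ℕ) = (j : ℕ) + 1 then -(MM n y i k) else 0) := by
    intro k
    simp only [EE, Matrix.of_apply]
    rcases eq_or_ne k j with h | h
    · subst h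
      have h2 : ¬((k : ℕ) = (k : ℕ) + 1) := by omega
      simp [h2]
    · simp only [if_neg h]
      by_cases h2 : (k : ℕ) = (j : ℕ) + 1
      · simp [h2, mul_neg_one]
      · simp [h2]
  rw [Finset.sum_congr rfl fun k _ => hsummand k, Finset.sum_add_distrib]
  have h1 : (∑ k : Fin n, if k = j then MM n y i k else 0) = MM n y i j := by simp
  have hi := i.isLt
  have hjlt := j.isLt
  by_cases hj : (j : ℕ) + 1 < n
  · have h2 : (∑ k : Fin n, if (k : ℕ) = (j : ℕ) + 1 then -(MM n y i k) else 0)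
        = -(MM n y i ⟨(j : ℕ) + 1, hj⟩) := by
      rw [Finset.sum_eq_single (⟨(j : ℕ) + 1, hj⟩ : Fin n)]
      · simp
      · intro b _ hb
        rw [if_neg]
        simpa [Fin.ext_iff] using hb
      · simp
    rw [h1, h2]
    simp only [MM, BB, Matrix.of_apply, Fin.ext_iff]
    split_ifs <;> first | ring1 | (exfalso; omega)
  · have h2 : (∑ k : Fin n, if (k : ℕ) = (j : ℕ) + 1 then -(MM n y i k) else 0) = 0 := by
      apply Finset.sum_eq_zero
      intro k _
      rw [if_neg]
      have := k.isLt
      omega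
    rw [h1, h2, add_zero]
    simp only [MM, BB, Matrix.of_apply, Fin.ext_iff]
    split_ifs <;> first | ring1 | (exfalso; omega)

lemma geom_aux (n : ℕ) (y : R) (i : Fin n) :
    (∑ k ∈ range ((i : ℕ) + 1), (if k ≤ (i : ℕ) then y ^ ((i : ℕ) - k) else 0) * y)
      = ∑ m ∈ range ((i : ℕ) + 1), y ^ (m + 1) := by
  have h1 : ∀ k ∈ range ((i : ℕ) + 1),
      (if k ≤ (i : ℕ) then y ^ ((i : ℕ) - k) else 0) * y = y ^ (((i : ℕ) - k) + 1) := by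
    intro k hk
    rw [Finset.mem_range] at hk
    rw [if_pos (by omega), ← pow_succ]
  rw [Finset.sum_congr rfl h1]
  have h2 := Finset.sum_range_reflect (fun m => y ^ (m + 1)) ((i : ℕ) + 1)
  simp only [Nat.add_sub_cancel] at h2
  exact h2

lemma FB (n : ℕ) (y : R) : FF n y * BB n y = VV n y := by
  ext i j
  rw [Matrix.mul_apply]
  have hi := i.isLt
  have hjlt := j.isLt
  by_cases hj : (j : ℕ) + 1 = n
  · have hBkj : ∀ k : Fin n, BB n y k j = if k = j then 1 + y else y := by
      intro k; simp [BB, hj]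
    by_cases hij : i = j
    · subst hij
      have hsummand : ∀ k : Fin n, FF n y i k * BB n y k i
          = (if (k : ℕ) ≤ (i : ℕ) then y ^ ((i : ℕ) - (k : ℕ)) else 0) * y
            + (if k = i then 1 else 0) := by
        intro k
        rw [hBkj]
        simp only [FF, Matrix.of_apply]
        rcases eq_or_ne k i with h | h
        · subst h
          simp [Nat.sub_self]
          ring
        · rw [if_neg h, if_neg h, add_zero]
      rw [Finset.sum_congr rfl fun k _ => hsummand k, Finset.sum_add_distrib]
      have hA : (∑ k : Fin n, if k = i then (1 : R) else 0) = 1 := by simp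
      have hB : (∑ k : Fin n,
            (if (k : ℕ) ≤ (i : ℕ) then y ^ ((i : ℕ) - (k : ℕ)) else 0) * y)
          = ∑ m ∈ range ((i : ℕ) + 1), y ^ (m + 1) := by
        rw [Fin.sum_univ_eq_sum_range
          (fun k => (if k ≤ (i : ℕ) then y ^ ((i : ℕ) - k) else 0) * y) n]
        rw [show range n = range ((i : ℕ) + 1) from by rw [hj], geom_aux]
      rw [hA, hB]
      simp only [VV, Matrix.of_apply, if_pos hj, if_pos rfl, if_true]
      rw [show range (n + 1) = range (((i : ℕ) + 1) + 1) from by rw [hj],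
        Finset.sum_range_succ' (fun m => y ^ m) ((i : ℕ) + 1)]
      simp
    · have hij' : (i : ℕ) < (j : ℕ) := by
        rcases Nat.lt_or_ge (i : ℕ) (j : ℕ) with h | h
        · exact h
        · exact absurd (Fin.ext (by omega)) hij
      have hsummand : ∀ k : Fin n, FF n y i k * BB n y k j
          = (if (k : ℕ) ≤ (i : ℕ) then y ^ ((i : ℕ) - (k : ℕ)) else 0) * y := by
        intro k
        rw [hBkj]
        simp only [FF, Matrix.of_apply]
        rcases eq_or_ne k j with h | h
        · subst h
          rw [if_neg (by omega), zero_mul, zero_mul]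
        · rw [if_neg h]
      rw [Finset.sum_congr rfl fun k _ => hsummand k]
      rw [Fin.sum_univ_eq_sum_range
        (fun k => (if k ≤ (i : ℕ) then y ^ ((i : ℕ) - k) else 0) * y) n]
      rw [← Finset.sum_subset (Finset.range_subset_range.mpr (show (i : ℕ) + 1 ≤ n by omega))
        (fun x _ hx => by
          rw [Finset.mem_range] at hx
          rw [if_neg (by omega), zero_mul])]
      rw [geom_aux]
      simp only [VV, Matrix.of_apply, if_pos hj, if_neg hij]
  · have hj2 : (j : ℕ) + 1 < n := by omega
    have hsummand : ∀ k : Fin n, FF n y i k * BB n y k j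
        = (if k = j then FF n y i j else 0)
          + (if (k : ℕ) = (j : ℕ) + 1 then FF n y i k * (-y) else 0) := by
      intro k
      simp only [BB, Matrix.of_apply, if_neg hj]
      rcases eq_or_ne k j with h | h
      · subst h
        rw [if_pos rfl, if_pos rfl, mul_one, if_neg (by omega), add_zero]
      · rw [if_neg h, if_neg h]
        by_cases h2 : (k : ℕ) = (j : ℕ) + 1
        · rw [if_pos h2, if_pos h2, zero_add]
        · rw [if_neg h2, if_neg h2, mul_zero, add_zero]
    rw [Finset.sum_congr rfl fun k _ => hsummand k, Finset.sum_add_distrib]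
    have hA : (∑ k : Fin n, if k = j then FF n y i j else 0) = FF n y i j := by simp
    have hB : (∑ k : Fin n, if (k : ℕ) = (j : ℕ) + 1 then FF n y i k * (-y) else 0)
        = FF n y i ⟨(j : ℕ) + 1, hj2⟩ * (-y) := by
      rw [Finset.sum_eq_single (⟨(j : ℕ) + 1, hj2⟩ : Fin n)]
      · simp
      · intro b _ hb
        rw [if_neg]
        simpa [Fin.ext_iff] using hb
      · simp
    rw [hA, hB]
    simp only [FF, VV, Matrix.of_apply, if_neg hj, Fin.val_mk]
    rcases lt_trichotomy (i : ℕ) (j : ℕ) with h | h | h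
    · rw [if_neg (by omega), if_neg (by omega), if_neg (by simp [Fin.ext_iff]; omega)]
      ring
    · rw [if_pos (by omega), if_neg (by omega), if_pos (Fin.ext h),
        show (i : ℕ) - (j : ℕ) = 0 by omega]
      simp
    · rw [if_pos (by omega), if_pos (by omega), if_neg (by simp [Fin.ext_iff]; omega),
        show (i : ℕ) - (j : ℕ) = ((i : ℕ) - ((j : ℕ) + 1)) + 1 by omega, pow_succ]
      ring

lemma detFF (n : ℕ) (y : R) : (FF n y).det = 1 := by
  rw [Matrix.det_of_lowerTriangular (FF n y)
    (fun i j (h : OrderDual.toDual j < OrderDual.toDual i) => by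
      have hij : i < j := h
      simp only [FF, Matrix.of_apply]
      rw [if_neg (by exact Nat.not_le.mpr hij)])]
  apply Finset.prod_eq_one
  intro i _
  simp [FF]

lemma detEE (n : ℕ) : (EE n (R := R)).det = 1 := by
  rw [Matrix.det_of_lowerTriangular (EE n)
    (fun i j (h : OrderDual.toDual j < OrderDual.toDual i) => by
      have hij : i < j := h
      have hij' : (i : ℕ) < (j : ℕ) := hij
      simp only [EE, Matrix.of_apply]
      rw [if_neg (by exact Fin.ne_of_lt hij), if_neg (by omega)])]
  apply Finset.prod_eq_one
  intro i _
  simp [EE]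

lemma detVV (n : ℕ) (hn : 1 ≤ n) (y : R) :
    (VV n y).det = ∑ m ∈ range (n + 1), y ^ m := by
  rw [Matrix.det_of_upperTriangular
    (show (VV n y).BlockTriangular id from fun i j (h : (j : Fin n) < i) => by
      have hij : (j : ℕ) < (i : ℕ) := h
      have hi := i.isLt
      simp only [VV, Matrix.of_apply]
      rw [if_neg (by omega), if_neg (by exact fun hh => absurd (Fin.val_eq_of_eq hh) (by omega))])]
  have hlast : ((n : ℕ) - 1) < n := by omega
  rw [Finset.prod_eq_single (⟨n - 1, hlast⟩ : Fin n)]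
  · simp [VV, Nat.sub_add_cancel hn]
  · intro b _ hb
    have hb' : (b : ℕ) + 1 ≠ n := by
      intro hh
      exact hb (Fin.ext (by simp; omega))
    simp [VV, hb']
  · simp

lemma detMM (n : ℕ) (hn : 1 ≤ n) (y : R) :
    (MM n y).det = ∑ m ∈ range (n + 1), y ^ m := by
  have h : FF n y * (MM n y * EE n) = VV n y := by
    rw [ME, FB]
  have h2 := congrArg Matrix.det h
  rw [Matrix.det_mul, Matrix.det_mul, detFF, detEE, detVV n hn y, mul_one, one_mul] at h2
  exact h2

end UnitMatrixDetAux

/-- **Determinant of the matrix `U` of Proposition `prop:matrix`.**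
Let `R` be a commutative ring, `s ≥ 1`, `y ∈ R`, and `u 1, …, u (s-1)` units of `R`.
Let `U` be the `s×s` matrix (rows and columns indexed `1,…,s`, here `0`-based) with
`1 + y` on the diagonal, `(u_{i} u_{i+1} ⋯ u_{j-1}) y` in position `(i,j)` above the
diagonal and `(u_j ⋯ u_{i-1})⁻¹` below the diagonal.  Then `det U = ∑_{j=0}^{s} y^j`. -/
theorem unit_matrix_det (R : Type*) [CommRing R] (s : ℕ) (hs : 1 ≤ s)
    (y : R) (u : ℕ → Rˣ)
    (U : Matrix (Fin s) (Fin s) R)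
    (hU : ∀ i j : Fin s, U i j =
      if i = j then 1 + y
      else if i.val < j.val then (((∏ k ∈ Finset.Ico (i.val + 1) (j.val + 1), u k : Rˣ)) : R) * y
      else ((((∏ k ∈ Finset.Ico (j.val + 1) (i.val + 1), u k : Rˣ))⁻¹ : Rˣ) : R)) :
    U.det = ∑ j ∈ Finset.range (s + 1), y ^ j := by
  classical
  set d : Fin s → Rˣ := fun i => ∏ k ∈ Finset.Ico 1 ((i : ℕ) + 1), u k with hd
  have hfac : U = Matrix.diagonal (fun i => (((d i)⁻¹ : Rˣ) : R)) * UnitMatrixDetAux.MM s y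
      * Matrix.diagonal (fun i => ((d i : Rˣ) : R)) := by
    ext i j
    rw [Matrix.mul_diagonal, Matrix.diagonal_mul, hU i j]
    rcases lt_trichotomy ((i : ℕ)) ((j : ℕ)) with h | h | h
    · have hne : i ≠ j := Fin.ne_of_val_ne (Nat.ne_of_lt h)
      rw [if_neg hne, if_pos h]
      simp only [UnitMatrixDetAux.MM, Matrix.of_apply, if_neg hne, if_pos h]
      have hc : d i * (∏ k ∈ Finset.Ico ((i : ℕ) + 1) ((j : ℕ) + 1), u k) = d j := by
        simp only [hd]
        exact Finset.prod_Ico_consecutive u (by omega) (by omega)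
      have hc2 : (d i)⁻¹ * d j = ∏ k ∈ Finset.Ico ((i : ℕ) + 1) ((j : ℕ) + 1), u k := by
        rw [← hc, inv_mul_cancel_left]
      rw [← hc2, Units.val_mul]
      ring
    · have heq : i = j := Fin.ext h
      subst heq
      rw [if_pos rfl]
      simp only [UnitMatrixDetAux.MM, Matrix.of_apply, if_pos rfl]
      have h1 : ((d i)⁻¹ : Rˣ) * (d i) = 1 := inv_mul_cancel (d i)
      calc (1 + y : R) = (((d i)⁻¹ : Rˣ) * (d i) : Rˣ) * (1 + y) := by rw [h1]; simp
        _ = (((d i)⁻¹ : Rˣ) : R) * (1 + y) * ((d i : Rˣ) : R) := by rw [Units.val_mul]; ring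
    · have hne : i ≠ j := Fin.ne_of_val_ne (Nat.ne_of_gt h)
      rw [if_neg hne, if_neg (by omega)]
      simp only [UnitMatrixDetAux.MM, Matrix.of_apply, if_neg hne, if_neg (show ¬((i : ℕ) < (j : ℕ)) by omega)]
      have hc : d j * (∏ k ∈ Finset.Ico ((j : ℕ) + 1) ((i : ℕ) + 1), u k) = d i := by
        simp only [hd]
        exact Finset.prod_Ico_consecutive u (by omega) (by omega)
      have hc2 : (d i)⁻¹ * d j = (∏ k ∈ Finset.Ico ((j : ℕ) + 1) ((i : ℕ) + 1), u k)⁻¹ := by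
        rw [← hc, mul_inv_rev, inv_mul_cancel_right]
      rw [← hc2, Units.val_mul]
      ring
  rw [hfac, Matrix.det_mul, Matrix.det_mul, Matrix.det_diagonal, Matrix.det_diagonal,
    UnitMatrixDetAux.detMM s hs y]
  have hp : (∏ i : Fin s, (((d i)⁻¹ : Rˣ) : R)) * (∏ i : Fin s, ((d i : Rˣ) : R)) = 1 := by
    rw [← Finset.prod_mul_distrib]
    apply Finset.prod_eq_one
    intro i _
    rw [← Units.val_mul, inv_mul_cancel]
    rfl
  calc (∏ i : Fin s, (((d i)⁻¹ : Rˣ) : R)) * (∑ m ∈ Finset.range (s + 1), y ^ m)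
        * (∏ i : Fin s, ((d i : Rˣ) : R))
      = ((∏ i : Fin s, (((d i)⁻¹ : Rˣ) : R)) * (∏ i : Fin s, ((d i : Rˣ) : R)))
        * (∑ m ∈ Finset.range (s + 1), y ^ m) := by ring
    _ = ∑ m ∈ Finset.range (s + 1), y ^ m := by rw [hp, one_mul]
end

section
/- Let R be a commutative ring, s ≥ 1, y ∈ R, and u_1, ..., u_{s-1} units in R with δ = ∏_{i=1}^{s-1} u_i. Let U be the s×s matrix with U_{i,i} = 1+y, U_{i,j} = (∏_{k=i}^{j-1} u_k) y for i < j, and U_{i,j} = (∏_{k=j}^{i-1} u_k)^{-1} for i > j. Then there exist invertible s×s matrices P and Q over R with det P = (-1)^{s-1} and det Q = 1 such that P·U·Q is the diagonal matrix diag(-u_1, ..., -u_{s-1}, δ^{-1} ∑_{j=0}^{s} y^j). -/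
/-!
With `v i = u 0 ⋯ u i`, the matrix `U` equals `diag(v)⁻¹ M diag(v)`, where `M` has `1 + y` on,
`y` above and `1` below the diagonal. Multiplying `M` on the right by the inverse of the lower
bidiagonal matrix `L` (`1` on, `-y` just below the diagonal) gives a matrix of geometric sums;
rotating its columns by one place gives `T E diag(-1, …, -1, Φ)`, with `T` the upper
triangular all-ones matrix, `E` a unipotent matrix clearing the last row and
`Φ = 1 + y + ⋯ + y ^ s`. The units are moved into the diagonal by `diag(u 1, …, u (s-1), δ⁻¹)`,
of determinant `1`, the column rotation accounts for the sign `(-1) ^ (s - 1)`, and rescaling a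
single coordinate puts the rest of the determinant into `P`.
-/

open Finset Matrix

namespace UnitMatrixDiagonalForm

variable {R : Type*} [CommRing R]

theorem exists_mul_mul_eq_diagonal {ι : Type*} [Fintype ι] [DecidableEq ι] (i₀ : ι)
    {A Y Z : Matrix ι ι R} {d : ι → R} (hY : IsUnit Y.det) (hZ : IsUnit Z.det)
    (hA : A = Y * diagonal d * Z) :
    ∃ P Q : Matrix ι ι R, P.det * (Y.det * Z.det) = 1 ∧ Q.det = 1 ∧ P * A * Q = diagonal d := by
  obtain ⟨z, hz⟩ := hZ
  -- rescaling one coordinate by `det Z` normalises `det Q` without changing the diagonal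
  set G : Matrix ι ι R := diagonal (Pi.mulSingle i₀ (z : R))
  set G' : Matrix ι ι R := diagonal (Pi.mulSingle i₀ ((z⁻¹ : Rˣ) : R))
  have hG : G' * G = 1 := by
    rw [diagonal_mul_diagonal, ← diagonal_one]
    exact congrArg diagonal <| funext fun i => by
      rw [← Pi.mul_apply, ← Pi.mulSingle_mul, Units.inv_mul, Pi.mulSingle_one, Pi.one_apply]
  refine ⟨G' * Y⁻¹, Z⁻¹ * G, ?_, ?_, ?_⟩
  · rw [det_mul, det_nonsing_inv, det_diagonal, Fintype.prod_pi_mulSingle', ← hz]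
    calc (↑z⁻¹ : R) * Ring.inverse Y.det * (Y.det * z)
        = (Ring.inverse Y.det * Y.det) * (↑z⁻¹ * z) := by ring
      _ = 1 := by rw [Ring.inverse_mul_cancel _ hY, Units.inv_mul, one_mul]
  · rw [det_mul, det_nonsing_inv, det_diagonal, Fintype.prod_pi_mulSingle', ← hz,
      Ring.inverse_unit, Units.inv_mul]
  · calc G' * Y⁻¹ * A * (Z⁻¹ * G) = G' * (Y⁻¹ * Y) * diagonal d * (Z * Z⁻¹) * G := by
          simp only [hA, Matrix.mul_assoc]
      _ = diagonal d * (G' * G) := by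
          rw [nonsing_inv_mul _ hY, mul_nonsing_inv _ (hz ▸ z.isUnit), Matrix.mul_one,
            Matrix.mul_one, (commute_diagonal _ _).eq, Matrix.mul_assoc]
      _ = diagonal d := by rw [hG, Matrix.mul_one]

-- Including `u 0` is harmless: only the quotients `prefixProd u j / prefixProd u i` occur.
def prefixProd (u : ℕ → Rˣ) (i : ℕ) : Rˣ :=
  ∏ k ∈ range (i + 1), u k

section
variable (s : ℕ) (y : R)

def unitMatrix (u : ℕ → Rˣ) : Matrix (Fin s) (Fin s) R :=
  of fun i j =>
    if i = j then 1 + y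
    else if i.val < j.val then (((∏ k ∈ Ico (i.val + 1) (j.val + 1), u k : Rˣ)) : R) * y
    else ((((∏ k ∈ Ico (j.val + 1) (i.val + 1), u k : Rˣ))⁻¹ : Rˣ) : R)

def baseMatrix : Matrix (Fin s) (Fin s) R :=
  of fun i j => if i = j then 1 + y else if i < j then y else 1

theorem unitMatrix_eq_diagonal_mul_baseMatrix_mul_diagonal (u : ℕ → Rˣ) :
    unitMatrix s y u = diagonal (fun i : Fin s => (((prefixProd u i)⁻¹ : Rˣ) : R)) *
      baseMatrix s y * diagonal (fun i : Fin s => (prefixProd u i : R)) := by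
  ext i j
  simp only [unitMatrix, baseMatrix, prefixProd, of_apply, mul_diagonal, diagonal_mul,
    Fin.lt_def]
  split_ifs with hij hlt
  · rw [hij, mul_comm, ← mul_assoc, Units.mul_inv, one_mul]
  · rw [prod_Ico_eq_div _ (by omega), div_eq_mul_inv, Units.val_mul]
    ring
  · rw [prod_Ico_eq_div _ (by omega), inv_div, div_eq_mul_inv, Units.val_mul]
    ring

end

section
variable (n : ℕ) (y : R)

def geomSumMatrix : Matrix (Fin (n + 1)) (Fin (n + 1)) R :=
  of fun i j => (∑ m ∈ range (n + 1 + 1 - j), y ^ m) - if i < j then 1 else 0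

def lowerBidiagonal : Matrix (Fin (n + 1)) (Fin (n + 1)) R :=
  of fun i j => if i = j then 1 else if (i : ℕ) = j + 1 then -y else 0

theorem lowerBidiagonal_col_castSucc (j : Fin n) :
    (lowerBidiagonal n y).col j.castSucc = Pi.single j.castSucc 1 - y • Pi.single j.succ 1 := by
  ext k
  simp only [col_apply, lowerBidiagonal, of_apply, Pi.sub_apply, Pi.smul_apply, Pi.single_apply,
    Fin.ext_iff, Fin.val_castSucc, Fin.val_succ, smul_eq_mul]
  split_ifs <;> first | omega | ring

theorem lowerBidiagonal_col_last :
    (lowerBidiagonal n y).col (Fin.last n) = Pi.single (Fin.last n) 1 := by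
  ext k
  simp only [col_apply, lowerBidiagonal, of_apply, Pi.single_apply, Fin.ext_iff, Fin.val_last]
  split_ifs <;> first | omega | rfl

theorem baseMatrix_eq_geomSumMatrix_mul :
    baseMatrix (n + 1) y = geomSumMatrix n y * lowerBidiagonal n y := by
  ext i j
  change _ = (geomSumMatrix n y *ᵥ (lowerBidiagonal n y).col j) i
  rcases j.eq_castSucc_or_eq_last with ⟨j, rfl⟩ | rfl
  · rw [lowerBidiagonal_col_castSucc, mulVec_sub, mulVec_smul, mulVec_single_one,
      mulVec_single_one]
    have hlen : n + 1 + 1 - j = n + 1 - j + 1 := by omega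
    simp only [baseMatrix, geomSumMatrix, of_apply, Pi.sub_apply, Pi.smul_apply, col_apply,
      smul_eq_mul, Fin.ext_iff, Fin.lt_def, Fin.val_castSucc, Fin.val_succ,
      Nat.add_sub_add_right, hlen, geom_sum_succ]
    split_ifs <;> first | omega | ring
  · rw [lowerBidiagonal_col_last, mulVec_single_one]
    have hlen : n + 1 + 1 - n = 1 + 1 := by omega
    simp only [baseMatrix, geomSumMatrix, of_apply, col_apply, Fin.ext_iff, Fin.lt_def,
      Fin.val_last, hlen, geom_sum_succ, range_one, sum_singleton, pow_zero]
    split_ifs <;> first | omega | ring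

def upperOnes : Matrix (Fin (n + 1)) (Fin (n + 1)) R :=
  of fun i j => if i ≤ j then 1 else 0

def tailGeomSums : Fin (n + 1) → R :=
  fun j => if (j : ℕ) < n then ∑ m ∈ range (n + 1 - j), y ^ m else 0

def lastRowElim : Matrix (Fin (n + 1)) (Fin (n + 1)) R :=
  1 - vecMulVec (Pi.single (Fin.last n) 1) (tailGeomSums n y)

def smithDiag : Fin (n + 1) → R :=
  fun j => if (j : ℕ) < n then -1 else ∑ m ∈ range (n + 1 + 1), y ^ m

theorem upperOnes_mul_lastRowElim_apply (i j : Fin (n + 1)) :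
    (upperOnes n * lastRowElim n y : Matrix (Fin (n + 1)) (Fin (n + 1)) R) i j =
      (if i ≤ j then 1 else 0) - tailGeomSums n y j := by
  rw [lastRowElim, Matrix.mul_sub, Matrix.mul_one, mul_vecMulVec, mulVec_single_one]
  simp [upperOnes, vecMulVec_apply, Fin.le_last]

theorem geomSumMatrix_submatrix_finRotate :
    (geomSumMatrix n y).submatrix id (finRotate (n + 1)) =
      upperOnes n * lastRowElim n y * diagonal (smithDiag n y) := by
  ext i j
  rw [mul_diagonal, upperOnes_mul_lastRowElim_apply]
  rcases j.eq_castSucc_or_eq_last with ⟨j, rfl⟩ | rfl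
  · simp only [submatrix_apply, id, finRotate_apply, Fin.coeSucc_eq_succ, geomSumMatrix,
      tailGeomSums, smithDiag, of_apply, Fin.lt_def, Fin.le_def, Fin.val_castSucc, Fin.val_succ,
      Nat.add_sub_add_right, j.isLt, if_true]
    split_ifs <;> first | omega | ring
  · simp only [submatrix_apply, id, finRotate_last, geomSumMatrix, tailGeomSums, smithDiag,
      of_apply, Fin.val_last, Fin.le_last, Fin.val_zero, Nat.sub_zero, Fin.not_lt_zero,
      lt_irrefl, if_true, if_false]
    ring

theorem baseMatrix_eq_mul_diagonal_mul :
    baseMatrix (n + 1) y = upperOnes n * lastRowElim n y * diagonal (smithDiag n y) *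
      (lowerBidiagonal n y).submatrix (finRotate (n + 1)) id := by
  rw [← geomSumMatrix_submatrix_finRotate, submatrix_mul_equiv, submatrix_id_id,
    baseMatrix_eq_geomSumMatrix_mul]

theorem det_upperOnes : (upperOnes n : Matrix (Fin (n + 1)) (Fin (n + 1)) R).det = 1 := by
  refine (det_of_isUpperTriangular fun i j (h : j < i) => if_neg h.not_ge).trans ?_
  exact prod_eq_one fun i _ => if_pos le_rfl

theorem det_lastRowElim : (lastRowElim n y).det = 1 := by
  refine (det_of_isLowerTriangular _ fun i j (h : i < j) => ?_).trans ?_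
  · have : i ≠ Fin.last n := (h.trans_le (Fin.le_last j)).ne
    simp [lastRowElim, vecMulVec_apply, this, h.ne]
  · refine prod_eq_one fun i _ => ?_
    simp only [lastRowElim, Matrix.sub_apply, one_apply_eq, vecMulVec_apply, Pi.single_apply,
      tailGeomSums, Fin.ext_iff, Fin.val_last]
    split_ifs <;> first | omega | ring

theorem det_lowerBidiagonal : (lowerBidiagonal n y).det = 1 := by
  refine (det_of_isLowerTriangular _ fun i j (h : i < j) => ?_).trans ?_
  · simp only [lowerBidiagonal, of_apply, h.ne, if_false]
    rw [if_neg (by rw [Fin.lt_def] at h; omega)]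
  · simp [lowerBidiagonal]

theorem det_lowerBidiagonal_submatrix_finRotate :
    ((lowerBidiagonal n y).submatrix (finRotate (n + 1)) id).det = (-1) ^ n := by
  rw [det_permute, sign_finRotate, det_lowerBidiagonal, Nat.add_sub_cancel]
  push_cast
  ring

def smithScale (u : ℕ → Rˣ) : Fin (n + 1) → Rˣ :=
  fun i => if (i : ℕ) < n then u (i + 1) else (∏ k ∈ Ico 1 (n + 1), u k)⁻¹

theorem prod_smithScale (u : ℕ → Rˣ) : ∏ i, smithScale n u i = 1 := by
  rw [Fin.prod_univ_castSucc]
  simp only [smithScale, Fin.val_castSucc, Fin.is_lt, if_true, Fin.val_last, lt_irrefl, if_false]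
  rw [Fin.prod_univ_eq_prod_range (fun k => u (k + 1)), range_eq_Ico, prod_Ico_add', zero_add,
    mul_inv_cancel]

theorem smithDiag_mul_smithScale (u : ℕ → Rˣ) (i : Fin (n + 1)) :
    smithDiag n y i * smithScale n u i =
      if i.val + 1 < n + 1 then -(u (i.val + 1) : R)
      else ((((∏ k ∈ Ico 1 (n + 1), u k : Rˣ))⁻¹ : Rˣ) : R) * ∑ j ∈ range (n + 1 + 1), y ^ j := by
  simp only [smithDiag, smithScale, Nat.add_lt_add_iff_right]
  split_ifs <;> ring

theorem unitMatrix_eq_mul_diagonal_mul (u : ℕ → Rˣ) :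
    ∃ Y Z : Matrix (Fin (n + 1)) (Fin (n + 1)) R, Y.det * Z.det = (-1) ^ n ∧
      unitMatrix (n + 1) y u = Y * diagonal (fun i => smithDiag n y i * smithScale n u i) * Z := by
  refine ⟨diagonal (fun i : Fin (n + 1) => (((prefixProd u i)⁻¹ : Rˣ) : R)) *
      upperOnes n * lastRowElim n y,
    diagonal (fun i => (((smithScale n u i)⁻¹ : Rˣ) : R)) *
      (lowerBidiagonal n y).submatrix (finRotate (n + 1)) id *
      diagonal (fun i : Fin (n + 1) => (prefixProd u i : R)), ?_, ?_⟩
  · simp only [det_mul, det_diagonal, det_upperOnes, det_lastRowElim,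
      det_lowerBidiagonal_submatrix_finRotate, ← Units.coe_prod, prod_inv_distrib,
      prod_smithScale, inv_one, Units.val_one]
    linear_combination (-1 : R) ^ n * Units.inv_mul (∏ i : Fin (n + 1), prefixProd u i)
  · have hd : diagonal (smithDiag n y) = diagonal (fun i => smithDiag n y i * smithScale n u i) *
        diagonal (fun i => (((smithScale n u i)⁻¹ : Rˣ) : R)) := by
      rw [diagonal_mul_diagonal]
      exact congrArg diagonal (funext fun i => by rw [mul_assoc, Units.mul_inv, mul_one])
    rw [unitMatrix_eq_diagonal_mul_baseMatrix_mul_diagonal, baseMatrix_eq_mul_diagonal_mul, hd]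
    simp only [Matrix.mul_assoc]

end

end UnitMatrixDiagonalForm

open UnitMatrixDiagonalForm

theorem unit_matrix_diagonal_form_general (R : Type*) [CommRing R] (s : ℕ)
    (y : R) (u : ℕ → Rˣ)
    (U : Matrix (Fin s) (Fin s) R)
    (hU : ∀ i j : Fin s, U i j =
      if i = j then 1 + y
      else if i.val < j.val then (((∏ k ∈ Finset.Ico (i.val + 1) (j.val + 1), u k : Rˣ)) : R) * y
      else ((((∏ k ∈ Finset.Ico (j.val + 1) (i.val + 1), u k : Rˣ))⁻¹ : Rˣ) : R)) :
    ∃ P Q : Matrix (Fin s) (Fin s) R, IsUnit P.det ∧ IsUnit Q.det ∧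
      P.det = (-1) ^ (s - 1) ∧ Q.det = 1 ∧
      P * U * Q = Matrix.diagonal (fun i : Fin s =>
        if i.val + 1 < s then (-(u (i.val + 1) : R))
        else ((((∏ k ∈ Finset.Ico 1 s, u k : Rˣ))⁻¹ : Rˣ) : R) *
          ∑ j ∈ Finset.range (s + 1), y ^ j) := by
  obtain rfl : U = unitMatrix s y u := Matrix.ext hU
  rcases s with _ | n
  · exact ⟨1, 1, by simp, by simp, by simp, det_one, Subsingleton.elim _ _⟩
  obtain ⟨Y, Z, hdet, hfact⟩ := unitMatrix_eq_mul_diagonal_mul n y u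
  have hsign : IsUnit (Y.det * Z.det) := hdet ▸ isUnit_neg_one.pow n
  obtain ⟨P, Q, hP, hQ, hPQ⟩ := exists_mul_mul_eq_diagonal 0
    (isUnit_of_mul_isUnit_left hsign) (isUnit_of_mul_isUnit_right hsign) hfact
  have hPdet : P.det = (-1) ^ n := by
    rw [hdet] at hP
    exact left_inv_eq_right_inv hP (by rw [← mul_pow, neg_mul_neg, one_mul, one_pow])
  refine ⟨P, Q, hPdet ▸ isUnit_neg_one.pow n, hQ ▸ isUnit_one, hPdet, hQ, ?_⟩
  rw [hPQ]
  exact congrArg diagonal (funext (smithDiag_mul_smithScale n y u))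

/-- **Diagonal form of the matrix `U` of Proposition `prop:matrix`.**
Let `R` be a commutative ring, `s ≥ 1`, `y ∈ R`, and `u 1, …, u (s-1)` units of `R`
with `δ = u 1 ⋯ u (s-1)`.  Let `U` be the `s×s` matrix with `1 + y` on the diagonal,
`(u_i ⋯ u_{j-1}) y` above and `(u_j ⋯ u_{i-1})⁻¹` below the diagonal.  Then there are
invertible matrices `P, Q` over `R` with `det P = (-1)^(s-1)`, `det Q = 1` and
`P * U * Q = diag(-u 1, …, -u (s-1), δ⁻¹ ∑_{j=0}^{s} y^j)`. -/
theorem unit_matrix_diagonal_form (R : Type*) [CommRing R] (s : ℕ) (hs : 1 ≤ s)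
    (y : R) (u : ℕ → Rˣ)
    (U : Matrix (Fin s) (Fin s) R)
    (hU : ∀ i j : Fin s, U i j =
      if i = j then 1 + y
      else if i.val < j.val then (((∏ k ∈ Finset.Ico (i.val + 1) (j.val + 1), u k : Rˣ)) : R) * y
      else ((((∏ k ∈ Finset.Ico (j.val + 1) (i.val + 1), u k : Rˣ))⁻¹ : Rˣ) : R)) :
    ∃ P Q : Matrix (Fin s) (Fin s) R, IsUnit P.det ∧ IsUnit Q.det ∧
      P.det = (-1) ^ (s - 1) ∧ Q.det = 1 ∧
      P * U * Q = Matrix.diagonal (fun i : Fin s =>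
        if i.val + 1 < s then (-(u (i.val + 1) : R))
        else ((((∏ k ∈ Finset.Ico 1 s, u k : Rˣ))⁻¹ : Rˣ) : R) *
          ∑ j ∈ Finset.range (s + 1), y ^ j) :=
  unit_matrix_diagonal_form_general R s y u U hU
end

section
/- Let d ≥ 3 and let W be the d×d weight matrix of an undissected d-gon with piece-weight x and edge weights q_1,...,q_d, given by W_{i,j} = q_i q_{i+1}⋯q_{j-1} x^{j-i-1} for i<j, W_{i,i}=0, and W_{i,j} = q_i⋯q_d q_1⋯q_{j-1} x^{d-1-(i-j)} for i>j. Then over the Laurent polynomial ring R = Z[x^{±1}; q_1^{±1},...,q_d^{±1}] there exist P ∈ GL(d,R) with det P = (-1)^{d-1} and Q ∈ SL(d,R) such that P·W·Q = diag(q_1, ..., q_{d-1}, q_d ∑_{j=0}^{d-2} (ε x^d)^j), where ε = q_1⋯q_d. -/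
namespace PW

open Fin.NatCast

/-- index of the last row/column -/
def lst (d : ℕ) [NeZero d] : Fin d :=
  ⟨d - 1, by have := Nat.pos_of_ne_zero (NeZero.ne d); omega⟩

section FinLemmas

variable {d : ℕ} [NeZero d]

lemma dpos : 0 < d := Nat.pos_of_ne_zero (NeZero.ne d)

lemma val_lst : (lst d).val = d - 1 := rfl

lemma modd {a : ℕ} (h : a < d) : a % d = a := Nat.mod_eq_of_lt h

lemma modd2 {a : ℕ} (h : d ≤ a) (h2 : a < 2 * d) : a % d = a - d := by
  rw [Nat.mod_eq_sub_mod h, Nat.mod_eq_of_lt (by omega)]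

lemma add_val (u v : Fin d) : (u + v).val = (u.val + v.val) % d := by
  rw [Fin.add_def]

lemma sub_val (u v : Fin d) : (u - v).val = (d - v.val + u.val) % d := by
  rw [Fin.sub_def]

lemma one_val (hd : 2 ≤ d) : (1 : Fin d).val = 1 := by
  rw [Fin.val_one']; exact modd (by omega)

lemma val_add_one {i : Fin d} (h : i.val + 1 < d) : (i + 1).val = i.val + 1 := by
  rw [add_val, one_val (by omega), modd h]

lemma lst_add_one (hd : 2 ≤ d) : lst d + 1 = 0 := by
  apply Fin.ext
  rw [add_val, one_val hd, val_lst, Fin.val_zero]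
  have : d - 1 + 1 = d := by have := dpos (d := d); omega
  rw [this, Nat.mod_self]

lemma ne_lst_iff (i : Fin d) : i ≠ lst d ↔ i.val + 1 < d := by
  rw [Ne, Fin.ext_iff, val_lst]
  have := i.isLt
  omega

lemma add_one_ne (hd : 2 ≤ d) (i : Fin d) : i + 1 ≠ i := by
  intro h
  have hv := congrArg Fin.val h
  rw [add_val, one_val hd] at hv
  have := i.isLt
  rcases Nat.lt_or_ge (i.val + 1) d with h' | h'
  · rw [modd h'] at hv; omega
  · have he : i.val + 1 = d := by omega
    rw [he, Nat.mod_self] at hv; omega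

lemma lst_ne_zero (hd : 2 ≤ d) : lst d ≠ 0 := by
  rw [Ne, Fin.ext_iff, val_lst, Fin.val_zero]; omega

lemma add_one_eq_iff {i j : Fin d} : j + 1 = i ↔ j = i - 1 := by
  constructor
  · intro h; rw [← h]; rw [add_sub_cancel_right]
  · intro h; rw [h, sub_add_cancel]

end FinLemmas

section Defs

variable {R : Type*} [CommRing R] {d : ℕ} [NeZero d]

/-- cyclic product `q i * q (i+1) * ⋯ * q (i+k-1)` -/
def piq (q : Fin d → R) (i : Fin d) (k : ℕ) : R :=
  ∏ t ∈ Finset.range k, q (i + (t : Fin d))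

def eps (q : Fin d → R) : R := ∏ s, q s

/-- `a = ε x^(d-1)` -/
def aa (x : R) (q : Fin d → R) : R := eps q * x ^ (d - 1)

/-- `y = ε x^d` -/
def yy (x : R) (q : Fin d → R) : R := eps q * x ^ d

/-- `a / q s`, division-free -/
def aq (x : R) (q : Fin d → R) (s : Fin d) : R :=
  x ^ (d - 1) * ∏ t ∈ Finset.univ.erase s, q t

def TT (x : R) (q : Fin d → R) (i j : ℕ) : R :=
  ∏ s ∈ Finset.Ico (j + 1) (i + 1), aq x q (s : Fin d)

def bb (x : R) (q : Fin d → R) (i : ℕ) : R :=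
  ∏ s ∈ Finset.range (i + 1), aq x q (s : Fin d)

def gg (x : R) (q : Fin d → R) (j : ℕ) : R :=
  -(piq q (lst d) (j + 1) * x ^ (j + 1) * ∑ m ∈ Finset.range (d - 2 - j), yy x q ^ m)

lemma piq_one (q : Fin d → R) (i : Fin d) : piq q i 1 = q i := by
  simp [piq]

lemma piq_succ (q : Fin d → R) (i : Fin d) (k : ℕ) :
    piq q i (k + 1) = piq q i k * q (i + (k : Fin d)) :=
  Finset.prod_range_succ _ _

lemma piq_succ' (q : Fin d → R) (i : Fin d) (k : ℕ) :
    piq q i (k + 1) = q i * piq q (i + 1) k := by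
  rw [piq, Finset.prod_range_succ']
  simp only [Nat.cast_zero, add_zero, Nat.cast_add, Nat.cast_one]
  rw [mul_comm, piq]
  congr 1
  apply Finset.prod_congr rfl
  intro t _
  congr 1
  abel

lemma piq_d (q : Fin d → R) (i : Fin d) : piq q i d = eps q := by
  rw [piq, ← Fin.prod_univ_eq_prod_range (fun t => q (i + (t : Fin d))) d]
  simp only [Fin.cast_val_eq_self]
  exact Fintype.prod_equiv (Equiv.addLeft i) _ _ (fun t => rfl)

lemma q_aq (x : R) (q : Fin d → R) (s : Fin d) : q s * aq x q s = aa x q := by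
  rw [aq, aa, eps, mul_comm (x ^ (d-1)), ← mul_assoc, Finset.mul_prod_erase _ _ (Finset.mem_univ s)]

lemma TT_diag (x : R) (q : Fin d → R) (i : ℕ) : TT x q i i = 1 := by
  simp [TT]

lemma TT_succ (x : R) (q : Fin d → R) {i j : ℕ} (h : j ≤ i) :
    TT x q (i + 1) j = TT x q i j * aq x q ((i + 1 : ℕ) : Fin d) := by
  rw [TT, TT, Finset.prod_Ico_succ_top (by omega)]

lemma bb_succ (x : R) (q : Fin d → R) (i : ℕ) :
    bb x q (i + 1) = bb x q i * aq x q ((i + 1 : ℕ) : Fin d) :=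
  Finset.prod_range_succ _ _

lemma bb_zero (x : R) (q : Fin d → R) : bb x q 0 = aq x q 0 := by
  simp [bb]

lemma x_mul_aa (hd : 1 ≤ d) (x : R) (q : Fin d → R) : x * aa x q = yy x q := by
  rw [aa, yy, mul_comm x, mul_assoc, ← pow_succ]
  congr 2
  omega

end Defs

section Matrices

variable (R : Type*) [CommRing R] (d : ℕ) [NeZero d]

variable {R d} in
/-- the weight matrix -/
def Wd (x : R) (q : Fin d → R) : Matrix (Fin d) (Fin d) R :=
  Matrix.of fun i j =>
    if i = j then 0 else piq q i ((j - i).val) * x ^ ((j - i).val - 1)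

variable {R d} in
def Em (x : R) (q : Fin d → R) : Matrix (Fin d) (Fin d) R :=
  Matrix.of fun i j =>
    if i = j then 1 else if j = i + 1 ∧ i ≠ lst d then -(q i * x) else 0

def Cm : Matrix (Fin d) (Fin d) R :=
  Matrix.of fun k j => if k = j + 1 then 1 else 0

variable {R d} in
def Mm (x : R) (q : Fin d → R) : Matrix (Fin d) (Fin d) R :=
  Matrix.of fun i j =>
    if i = lst d then Wd x q i j
    else if j = i then -(aa x q) else if j = i + 1 then q i else 0

variable {R d} in
def Nm (x : R) (q : Fin d → R) : Matrix (Fin d) (Fin d) R :=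
  Matrix.of fun i j =>
    if i = lst d then
      (if j = lst d then q i
       else if j.val + 2 ≤ d - 1 then piq q i (j.val + 2) * x ^ (j.val + 1) else 0)
    else if j = i then q i else if j + 1 = i then -(aa x q) else 0

variable {R d} in
def P1 (x : R) (q : Fin d → R) : Matrix (Fin d) (Fin d) R :=
  Matrix.of fun i j => if i = j then 1 else if i = lst d then gg x q j.val else 0

variable {R d} in
def N'm (x : R) (q : Fin d → R) : Matrix (Fin d) (Fin d) R :=
  Matrix.of fun i j =>
    if i = lst d then
      (if j = lst d then q i * ∑ m ∈ Finset.range (d - 1), yy x q ^ m else 0)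
    else if j = i then q i else if j + 1 = i then -(aa x q) else 0

variable {R d} in
def Q2 (x : R) (q : Fin d → R) : Matrix (Fin d) (Fin d) R :=
  Matrix.of fun i j =>
    if i = lst d then (if j = lst d then 1 else 0)
    else if j = lst d then bb x q i.val
    else if j.val ≤ i.val then TT x q i.val j.val else 0

variable {R d} in
def Fm (x : R) (q : Fin d → R) : Matrix (Fin d) (Fin d) R :=
  Matrix.of fun i j => if i = j then 1 else if j = lst d then bb x q i.val else 0

variable {R d} in
def Lm (x : R) (q : Fin d → R) : Matrix (Fin d) (Fin d) R :=
  Matrix.of fun i j =>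
    if j.val ≤ i.val ∧ i ≠ lst d then TT x q i.val j.val
    else if i = j then 1 else 0

variable {R d} in
def Dm (x : R) (q : Fin d → R) : Matrix (Fin d) (Fin d) R :=
  Matrix.diagonal fun i : Fin d =>
    if i.val + 1 < d then q i
    else q i * ∑ j ∈ Finset.range (d - 1), ((∏ s : Fin d, q s) * x ^ d) ^ j

def Dlt : Matrix (Fin d) (Fin d) R :=
  Matrix.diagonal fun i : Fin d => if i = lst d then 1 else -1

end Matrices

section Apply

variable {R : Type*} [CommRing R] {d : ℕ} [NeZero d] (x : R) (q : Fin d → R)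

lemma Wd_apply (i j : Fin d) : Wd x q i j =
    if i = j then 0 else piq q i ((j - i).val) * x ^ ((j - i).val - 1) := rfl

lemma Em_apply (i j : Fin d) : Em x q i j =
    if i = j then 1 else if j = i + 1 ∧ i ≠ lst d then -(q i * x) else 0 := rfl

lemma Cm_apply (k j : Fin d) : Cm R d k j = if k = j + 1 then 1 else 0 := rfl

lemma Mm_apply (i j : Fin d) : Mm x q i j =
    if i = lst d then Wd x q i j
    else if j = i then -(aa x q) else if j = i + 1 then q i else 0 := rfl

lemma Nm_apply (i j : Fin d) : Nm x q i j =
    (if i = lst d then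
      (if j = lst d then q i
       else if j.val + 2 ≤ d - 1 then piq q i (j.val + 2) * x ^ (j.val + 1) else 0)
    else if j = i then q i else if j + 1 = i then -(aa x q) else 0) := rfl

lemma P1_apply (i j : Fin d) : P1 x q i j =
    (if i = j then 1 else if i = lst d then gg x q j.val else 0) := rfl

lemma N'm_apply (i j : Fin d) : N'm x q i j =
    (if i = lst d then
      (if j = lst d then q i * ∑ m ∈ Finset.range (d - 1), yy x q ^ m else 0)
    else if j = i then q i else if j + 1 = i then -(aa x q) else 0) := rfl

lemma Q2_apply (i j : Fin d) : Q2 x q i j =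
    (if i = lst d then (if j = lst d then 1 else 0)
    else if j = lst d then bb x q i.val
    else if j.val ≤ i.val then TT x q i.val j.val else 0) := rfl

lemma Fm_apply (i j : Fin d) : Fm x q i j =
    (if i = j then 1 else if j = lst d then bb x q i.val else 0) := rfl

lemma Lm_apply (i j : Fin d) : Lm x q i j =
    (if j.val ≤ i.val ∧ i ≠ lst d then TT x q i.val j.val
    else if i = j then 1 else 0) := rfl

end Apply

section Products

variable {R : Type*} [CommRing R] {d : ℕ} [NeZero d]

lemma EW (hd : 3 ≤ d) (x : R) (q : Fin d → R) : Em x q * Wd x q = Mm x q := by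
  have hd2 : 2 ≤ d := by omega
  ext i j
  rw [Matrix.mul_apply]
  by_cases hi : i = lst d
  · rw [Fintype.sum_eq_single i ?side]
    · rw [Em_apply, if_pos rfl, one_mul, Mm_apply, if_pos hi]
    case side =>
      intro c hc
      rw [Em_apply, if_neg (fun h => hc h.symm), if_neg (fun h => h.2 hi), zero_mul]
  · have hilt : i.val + 1 < d := (ne_lst_iff i).mp hi
    rw [Fintype.sum_eq_add i (i + 1) (add_one_ne hd2 i).symm ?side]
    case side =>
      intro c hc
      rw [Em_apply, if_neg (fun h => hc.1 h.symm), if_neg (fun h => hc.2 h.1), zero_mul]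
    have hEii : Em x q i i = 1 := by rw [Em_apply, if_pos rfl]
    have hEi1 : Em x q i (i + 1) = -(q i * x) := by
      rw [Em_apply, if_neg (add_one_ne hd2 i).symm, if_pos ⟨rfl, hi⟩]
    rw [hEii, hEi1, one_mul, Mm_apply, if_neg hi]
    by_cases hji : j = i
    · subst hji
      rw [if_pos rfl]
      have hv : (j - (j + 1)).val = d - 1 := by
        rw [sub_val, val_add_one hilt, modd (by omega)]
        omega
      rw [Wd_apply, if_pos rfl, Wd_apply, if_neg (add_one_ne hd2 j), hv]
      have e1 : eps q = q j * piq q (j + 1) (d - 1) := by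
        rw [← piq_succ', show d - 1 + 1 = d by omega, piq_d]
      have e2 : x * x ^ (d - 1 - 1) = x ^ (d - 1) := by
        rw [← pow_succ']; congr 1; omega
      rw [aa, e1]
      calc (0:R) + -(q j * x) * (piq q (j + 1) (d - 1) * x ^ (d - 1 - 1))
          = -(q j * piq q (j + 1) (d - 1) * (x * x ^ (d - 1 - 1))) := by ring
        _ = -(q j * piq q (j + 1) (d - 1) * x ^ (d - 1)) := by rw [e2]
    · rw [if_neg hji]
      by_cases hji1 : j = i + 1
      · subst hji1
        rw [if_pos rfl]
        have hv : (i + 1 - i).val = 1 := by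
          rw [add_sub_cancel_left, one_val hd2]
        rw [Wd_apply, if_neg (add_one_ne hd2 i).symm, hv,
          Wd_apply, if_pos rfl, piq_one, pow_zero, mul_one, mul_zero, add_zero]
      · rw [if_neg hji1]
        have hk0 : (j - i).val ≠ 0 := by
          intro h
          exact hji (sub_eq_zero.mp (Fin.ext (by simp [h])))
        have hk1 : (j - i).val ≠ 1 := by
          intro h
          apply hji1
          have h1 : j - i = 1 := Fin.ext (by rw [h, one_val hd2])
          rw [sub_eq_iff_eq_add] at h1
          rw [h1, add_comm]
        have hkd : (j - i).val < d := (j - i).isLt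
        have hk' : (j - (i + 1)).val = (j - i).val - 1 := by
          rw [sub_add_eq_sub_sub, sub_val, one_val hd2, modd2 (by omega) (by omega)]
          omega
        rw [Wd_apply, if_neg (fun h => hji h.symm),
          Wd_apply, if_neg (fun h => hji1 h.symm), hk']
        have e1 : piq q i ((j - i).val) = q i * piq q (i + 1) ((j - i).val - 1) := by
          rw [← piq_succ']; congr 1; omega
        have e2 : x * x ^ ((j - i).val - 1 - 1) = x ^ ((j - i).val - 1) := by
          rw [← pow_succ']; congr 1; omega
        rw [e1, ← e2]
        ring

lemma MC (hd : 3 ≤ d) (x : R) (q : Fin d → R) : Mm x q * Cm R d = Nm x q := by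
  have hd2 : 2 ≤ d := by omega
  ext i j
  rw [Matrix.mul_apply]
  rw [Fintype.sum_eq_single (j + 1) ?side]
  case side =>
    intro c hc
    rw [Cm_apply, if_neg hc, mul_zero]
  rw [Cm_apply, if_pos rfl, mul_one, Mm_apply, Nm_apply]
  by_cases hi : i = lst d
  · rw [if_pos hi, if_pos hi]
    subst hi
    by_cases hj : j = lst d
    · rw [if_pos hj]
      subst hj
      rw [lst_add_one hd2, Wd_apply, if_neg (lst_ne_zero hd2)]
      have hv : ((0 : Fin d) - lst d).val = 1 := by
        rw [sub_val, val_lst, Fin.val_zero, modd (by omega)]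
        omega
      rw [hv, piq_one]
      norm_num
    · rw [if_neg hj]
      have hjlt : j.val + 1 < d := (ne_lst_iff j).mp hj
      have hj1v : (j + 1).val = j.val + 1 := val_add_one hjlt
      by_cases hj2 : j.val + 2 ≤ d - 1
      · rw [if_pos hj2]
        have hne : lst d ≠ j + 1 := by
          intro h
          have := congrArg Fin.val h
          rw [val_lst, hj1v] at this
          omega
        have hv : (j + 1 - lst d).val = j.val + 2 := by
          rw [sub_val, val_lst, hj1v, modd (by omega)]
          omega
        rw [Wd_apply, if_neg hne, hv]
        rfl
      · rw [if_neg hj2]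
        have : j + 1 = lst d := by
          apply Fin.ext
          rw [hj1v, val_lst]
          omega
        rw [Wd_apply, if_pos this.symm]
  · rw [if_neg hi, if_neg hi]
    by_cases hji : j = i
    · subst hji
      rw [if_neg (add_one_ne hd2 j), if_pos rfl, if_pos rfl]
    · rw [if_neg hji]
      by_cases h1 : j + 1 = i
      · rw [if_pos h1, if_pos h1]
      · rw [if_neg h1, if_neg h1, if_neg (fun h => hji (add_right_cancel h))]

lemma gg_def (x : R) (q : Fin d → R) (m : ℕ) : gg x q m =
    -(piq q (lst d) (m + 1) * x ^ (m + 1) * ∑ k ∈ Finset.range (d - 2 - m), yy x q ^ k) := rfl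

lemma gg_top (x : R) (q : Fin d → R) {m : ℕ} (h : d - 2 - m = 0) : gg x q m = 0 := by
  rw [gg_def, h]
  simp

lemma lst_add_cast (hd : 3 ≤ d) (j : Fin d) (hj : j.val + 1 < d) :
    lst d + ((j.val + 1 : ℕ) : Fin d) = j := by
  apply Fin.ext
  rw [add_val, val_lst, Fin.val_natCast, modd (show j.val + 1 < d from hj),
    modd2 (by omega) (by omega)]
  omega

lemma P1N (hd : 3 ≤ d) (x : R) (q : Fin d → R) : P1 x q * Nm x q = N'm x q := by
  have hd2 : 2 ≤ d := by omega
  ext i j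
  rw [Matrix.mul_apply, N'm_apply]
  by_cases hi : i = lst d
  swap
  · rw [Fintype.sum_eq_single i ?side, P1_apply, if_pos rfl, one_mul, Nm_apply,
      if_neg hi, if_neg hi]
    case side =>
      intro c hc
      rw [P1_apply, if_neg (fun h => hc h.symm), if_neg hi, zero_mul]
  · subst hi
    rw [if_pos rfl]
    by_cases hj : j = lst d
    · subst hj
      rw [if_pos rfl]
      rw [Fintype.sum_eq_add (lst d) 0 (lst_ne_zero hd2) ?side]
      case side =>
        intro c hc
        rw [Nm_apply, if_neg hc.1, if_neg (fun h => hc.1 h.symm),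
          if_neg (fun h => hc.2 (h.symm.trans (lst_add_one hd2))), mul_zero]
      rw [P1_apply, if_pos rfl, one_mul, Nm_apply, if_pos rfl, if_pos rfl,
        P1_apply, if_neg (lst_ne_zero hd2), if_pos rfl, Nm_apply,
        if_neg (fun h => (lst_ne_zero hd2) h.symm),
        if_neg (lst_ne_zero hd2), if_pos (lst_add_one hd2), Fin.val_zero, gg_def]
      rw [show d - 2 - 0 = d - 2 from rfl, piq_one, pow_one]
      have hsplit : (∑ m ∈ Finset.range (d - 1), yy x q ^ m)
          = (∑ m ∈ Finset.range (d - 2), yy x q ^ (m + 1)) + 1 := by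
        rw [show d - 1 = (d - 2) + 1 by omega, Finset.sum_range_succ', pow_zero]
      rw [hsplit]
      have key : (q (lst d) * x * ∑ m ∈ Finset.range (d - 2), yy x q ^ m) * aa x q
          = q (lst d) * ∑ m ∈ Finset.range (d - 2), yy x q ^ (m + 1) := by
        rw [Finset.mul_sum, Finset.mul_sum, Finset.sum_mul]
        apply Finset.sum_congr rfl
        intro m _
        have hxa : x * aa x q = yy x q := x_mul_aa (by omega) x q
        calc q (lst d) * x * yy x q ^ m * aa x q
            = q (lst d) * (yy x q ^ m * (x * aa x q)) := by ring
          _ = q (lst d) * (yy x q ^ m * yy x q) := by rw [hxa]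
          _ = q (lst d) * yy x q ^ (m + 1) := by rw [pow_succ]
      linear_combination key
    · rw [if_neg hj]
      have hjlt : j.val + 1 < d := (ne_lst_iff j).mp hj
      by_cases hj2 : j.val + 1 < d - 1
      swap
      · -- j.val = d - 2 : all terms vanish
        apply Finset.sum_eq_zero
        intro k _
        by_cases hk : k = lst d
        · subst hk
          rw [Nm_apply, if_pos rfl, if_neg hj, if_neg (by omega), mul_zero]
        · by_cases hkj : k = j
          · subst hkj
            rw [P1_apply, if_neg (fun h => hk h.symm), if_pos rfl, gg_top x q (by omega), zero_mul]
          · rw [Nm_apply, if_neg hk, if_neg (fun h => hkj h.symm),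
              if_neg ?h1, mul_zero]
            case h1 =>
              intro h
              apply hk
              apply Fin.ext
              rw [← h, val_add_one hjlt, val_lst]
              omega
      · -- generic column : three nonzero terms
        have hj1v : (j + 1).val = j.val + 1 := val_add_one hjlt
        have hj1ne : j + 1 ≠ lst d := by
          rw [ne_lst_iff, hj1v]
          omega
        have hjj1 : j ≠ j + 1 := (add_one_ne hd2 j).symm
        rw [← Finset.sum_subset
          (Finset.subset_univ (insert j (insert (j + 1) ({lst d} : Finset (Fin d))))) ?zeros]
        case zeros =>
          intro k _ hk
          simp only [Finset.mem_insert, Finset.mem_singleton, not_or] at hk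
          obtain ⟨hkj, hkj1, hkl⟩ := hk
          rw [Nm_apply, if_neg hkl, if_neg (fun h => hkj h.symm),
            if_neg (fun h => hkj1 h.symm), mul_zero]
        rw [Finset.sum_insert (by simp [hjj1, hj]), Finset.sum_insert (by simp [hj1ne]),
          Finset.sum_singleton]
        rw [P1_apply, if_neg (fun h => hj h.symm), if_pos rfl,
          Nm_apply, if_neg hj, if_pos rfl,
          P1_apply, if_neg (fun h => hj1ne h.symm), if_pos rfl,
          Nm_apply, if_neg hj1ne, if_neg hjj1, if_pos rfl,
          P1_apply, if_pos rfl, one_mul,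
          Nm_apply, if_pos rfl, if_neg hj, if_pos (by omega : j.val + 2 ≤ d - 1)]
        rw [hj1v, gg_def, gg_def]
        have hpi : piq q (lst d) (j.val + 1 + 1)
            = piq q (lst d) (j.val + 1) * q j := by
          rw [piq_succ, lst_add_cast hd j hjlt]
        have hS1 : (∑ m ∈ Finset.range (d - 2 - j.val), yy x q ^ m)
            = (∑ m ∈ Finset.range (d - 2 - (j.val + 1)), yy x q ^ (m + 1)) + 1 := by
          rw [show d - 2 - j.val = (d - 2 - (j.val + 1)) + 1 by omega,
            Finset.sum_range_succ', pow_zero]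
        have key : piq q (lst d) (j.val + 2) * x ^ (j.val + 1 + 1) * aa x q
              * (∑ m ∈ Finset.range (d - 2 - (j.val + 1)), yy x q ^ m)
            = piq q (lst d) (j.val + 2) * x ^ (j.val + 1)
              * (∑ m ∈ Finset.range (d - 2 - (j.val + 1)), yy x q ^ (m + 1)) := by
          rw [Finset.mul_sum, Finset.mul_sum]
          apply Finset.sum_congr rfl
          intro m _
          have hxa : x * aa x q = yy x q := x_mul_aa (by omega) x q
          calc piq q (lst d) (j.val + 2) * x ^ (j.val + 1 + 1) * aa x q * yy x q ^ m
              = piq q (lst d) (j.val + 2) * x ^ (j.val + 1)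
                  * ((x * aa x q) * yy x q ^ m) := by rw [pow_succ]; ring
            _ = piq q (lst d) (j.val + 2) * x ^ (j.val + 1) * (yy x q * yy x q ^ m) := by
                rw [hxa]
            _ = piq q (lst d) (j.val + 2) * x ^ (j.val + 1) * yy x q ^ (m + 1) := by
                rw [← pow_succ']
        rw [hS1]
        have hpi2 : (j.val + 2) = (j.val + 1) + 1 := rfl
        rw [hpi2, hpi] at key ⊢
        linear_combination key

lemma sub_one_val {i : Fin d} (hd2 : 2 ≤ d) (h : i.val ≠ 0) : (i - 1).val = i.val - 1 := by
  have := i.isLt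
  rw [sub_val, one_val hd2, modd2 (by omega) (by omega)]
  omega

lemma zero_sub_one (hd2 : 2 ≤ d) : (0 : Fin d) - 1 = lst d := by
  apply Fin.ext
  rw [sub_val, one_val hd2, Fin.val_zero, val_lst, modd (by omega)]
  omega

lemma ne_sub_one (hd2 : 2 ≤ d) (i : Fin d) : i ≠ i - 1 := by
  intro h
  have hv := congrArg Fin.val h
  by_cases h0 : i.val = 0
  · rw [show i = 0 from Fin.ext h0] at h
    rw [zero_sub_one hd2] at h
    exact lst_ne_zero hd2 h.symm
  · rw [sub_one_val hd2 h0] at hv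
    omega

lemma Dm_eq (x : R) (q : Fin d → R) : Dm x q = Matrix.diagonal (fun i : Fin d =>
    if i.val + 1 < d then q i
    else q i * ∑ m ∈ Finset.range (d - 1), yy x q ^ m) := rfl

lemma NQ (hd : 3 ≤ d) (x : R) (q : Fin d → R) : N'm x q * Q2 x q = Dm x q := by
  have hd2 : 2 ≤ d := by omega
  ext i j
  rw [Matrix.mul_apply, Dm_eq]
  by_cases hi : i = lst d
  · subst hi
    rw [Fintype.sum_eq_single (lst d) ?side]
    case side =>
      intro c hc
      rw [N'm_apply, if_pos rfl, if_neg hc, zero_mul]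
    rw [N'm_apply, if_pos rfl, if_pos rfl, Q2_apply, if_pos rfl]
    by_cases hj : j = lst d
    · subst hj
      rw [if_pos rfl, mul_one, Matrix.diagonal_apply_eq, if_neg (by rw [val_lst]; omega)]
    · rw [if_neg hj, mul_zero, Matrix.diagonal_apply_ne _ (fun h => hj h.symm)]
  · have hilt : i.val + 1 < d := (ne_lst_iff i).mp hi
    rw [Fintype.sum_eq_add i (i - 1) (ne_sub_one hd2 i) ?side]
    case side =>
      intro c hc
      rw [N'm_apply, if_neg hi, if_neg hc.1,
        if_neg (fun h => hc.2 (eq_sub_iff_add_eq.mpr h)), zero_mul]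
    rw [N'm_apply, if_neg hi, if_pos rfl,
      N'm_apply, if_neg hi, if_neg (Ne.symm (ne_sub_one hd2 i)),
      if_pos (sub_add_cancel i 1)]
    by_cases hi0 : i.val = 0
    · have hieq : i = 0 := Fin.ext hi0
      subst hieq
      rw [zero_sub_one hd2, Q2_apply (i := lst d), if_pos rfl,
        Q2_apply, if_neg (fun h => lst_ne_zero hd2 h.symm)]
      by_cases hj : j = lst d
      · subst hj
        rw [if_pos rfl, if_pos rfl, Fin.val_zero, bb_zero,
          Matrix.diagonal_apply_ne _ (lst_ne_zero hd2).symm]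
        linear_combination q_aq x q 0
      · rw [if_neg hj, if_neg hj, mul_zero, add_zero]
        by_cases hj0 : j = 0
        · subst hj0
          rw [if_pos le_rfl, Fin.val_zero, TT_diag,
            Matrix.diagonal_apply_eq, if_pos (by omega), mul_one]
        · rw [if_neg (by
            rw [Fin.val_zero]
            intro hle
            exact hj0 (Fin.ext (by omega))), mul_zero,
            Matrix.diagonal_apply_ne _ (fun h => hj0 h.symm)]
    · obtain ⟨m, hm⟩ : ∃ m, i.val = m + 1 := ⟨i.val - 1, by omega⟩
      have hsub : (i - 1).val = m := by rw [sub_one_val hd2 hi0, hm]; omega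
      have hi1lt : i - 1 ≠ lst d := by
        rw [ne_lst_iff, hsub]
        omega
      have hcast : ((m + 1 : ℕ) : Fin d) = i := by rw [← hm, Fin.cast_val_eq_self]
      rw [Q2_apply, if_neg hi, Q2_apply, if_neg hi1lt]
      by_cases hj : j = lst d
      · rw [if_pos hj, if_pos hj, hsub, hm, bb_succ, hcast,
          Matrix.diagonal_apply_ne _ (fun h => hi (h.trans hj))]
        linear_combination (bb x q m) * (q_aq x q i)
      · rw [if_neg hj, if_neg hj]
        by_cases hji : j = i
        · subst hji
          rw [if_pos le_rfl, TT_diag, if_neg (by rw [hsub]; omega), mul_zero, add_zero,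
            Matrix.diagonal_apply_eq, if_pos hilt, mul_one]
        · have hvne : j.val ≠ i.val := fun h => hji (Fin.ext h)
          by_cases hjle : j.val ≤ i.val
          · rw [if_pos hjle, if_pos (by rw [hsub]; omega), hsub, hm,
              TT_succ x q (by omega), hcast,
              Matrix.diagonal_apply_ne _ (fun h => hji h.symm)]
            linear_combination (TT x q m j.val) * (q_aq x q i)
          · rw [if_neg hjle, if_neg (by rw [hsub]; omega), mul_zero, mul_zero, add_zero,
              Matrix.diagonal_apply_ne _ (fun h => hji h.symm)]

lemma FL (hd : 3 ≤ d) (x : R) (q : Fin d → R) : Fm x q * Lm x q = Q2 x q := by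
  have hd2 : 2 ≤ d := by omega
  ext i j
  rw [Matrix.mul_apply, Q2_apply]
  by_cases hi : i = lst d
  · subst hi
    rw [Fintype.sum_eq_single (lst d) ?side]
    case side =>
      intro c hc
      rw [Fm_apply, if_neg (fun h => hc h.symm), if_neg hc, zero_mul]
    rw [Fm_apply, if_pos rfl, one_mul, Lm_apply, if_neg (fun h => h.2 rfl), if_pos rfl]
    by_cases hj : j = lst d
    · rw [if_pos hj, if_pos hj.symm]
    · rw [if_neg hj, if_neg (fun h => hj h.symm)]
  · rw [Fintype.sum_eq_add i (lst d) hi ?side]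
    case side =>
      intro c hc
      rw [Fm_apply, if_neg (fun h => hc.1 h.symm), if_neg hc.2, zero_mul]
    rw [Fm_apply, if_pos rfl, one_mul, Fm_apply, if_neg hi, if_pos rfl,
      Lm_apply (i := lst d), if_neg (fun h => h.2 rfl)]
    rw [if_neg hi]
    by_cases hj : j = lst d
    · rw [if_pos hj, if_pos hj.symm, mul_one]
      rw [Lm_apply, if_neg (fun h => absurd h.1 (by rw [hj, val_lst]; have := (ne_lst_iff i).mp hi; omega)),
        if_neg (fun h => hi (h.trans hj))]
      rw [zero_add]
    · rw [if_neg hj, if_neg (fun h => hj h.symm), mul_zero, add_zero, Lm_apply]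
      by_cases hjle : j.val ≤ i.val
      · rw [if_pos ⟨hjle, hi⟩, if_pos hjle]
      · rw [if_neg (fun h => hjle h.1), if_neg hjle, if_neg (fun h => hjle (by rw [h]))]

lemma det_Em (hd : 3 ≤ d) (x : R) (q : Fin d → R) : (Em x q).det = 1 := by
  rw [Matrix.det_of_upperTriangular (M := Em x q) ?ut]
  · apply Finset.prod_eq_one
    intro i _
    rw [Em_apply, if_pos rfl]
  case ut =>
    intro i j hji
    have hlt : (j : ℕ) < i := hji
    rw [Em_apply, if_neg (by intro h; rw [h] at hlt; omega),
      if_neg (by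
        intro h
        have := congrArg Fin.val h.1
        rw [val_add_one ((ne_lst_iff i).mp h.2)] at this
        omega)]

lemma det_P1 (hd : 3 ≤ d) (x : R) (q : Fin d → R) : (P1 x q).det = 1 := by
  rw [Matrix.det_of_lowerTriangular (P1 x q) ?lt]
  · apply Finset.prod_eq_one
    intro i _
    rw [P1_apply, if_pos rfl]
  case lt =>
    intro i j hij
    have hlt : (i : ℕ) < j := hij
    rw [P1_apply, if_neg (by intro h; rw [h] at hlt; omega),
      if_neg (by
        intro h
        rw [h, val_lst] at hlt
        have := j.isLt
        omega)]

lemma det_Fm (hd : 3 ≤ d) (x : R) (q : Fin d → R) : (Fm x q).det = 1 := by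
  rw [Matrix.det_of_upperTriangular (M := Fm x q) ?ut]
  · apply Finset.prod_eq_one
    intro i _
    rw [Fm_apply, if_pos rfl]
  case ut =>
    intro i j hji
    have hlt : (j : ℕ) < i := hji
    rw [Fm_apply, if_neg (by intro h; rw [h] at hlt; omega),
      if_neg (by
        intro h
        rw [h, val_lst] at hlt
        have := i.isLt
        omega)]

lemma det_Lm (hd : 3 ≤ d) (x : R) (q : Fin d → R) : (Lm x q).det = 1 := by
  rw [Matrix.det_of_lowerTriangular (Lm x q) ?lt]
  · apply Finset.prod_eq_one
    intro i _
    by_cases hi : i = lst d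
    · rw [Lm_apply, if_neg (fun h => h.2 hi), if_pos rfl]
    · rw [Lm_apply, if_pos ⟨le_rfl, hi⟩, TT_diag]
  case lt =>
    intro i j hij
    have hlt : (i : ℕ) < j := hij
    rw [Lm_apply, if_neg (fun h => by omega),
      if_neg (by intro h; rw [h] at hlt; omega)]

lemma lst_eq_last (n : ℕ) : lst (n + 1) = Fin.last n := rfl

lemma det_Cm (hd : 3 ≤ d) : (Cm R d).det = (-1 : R) ^ (d - 1) := by
  obtain ⟨n, rfl⟩ : ∃ n, d = n + 1 := ⟨d - 1, by omega⟩
  have hC : Cm R (n + 1) = ((finRotate (n + 1))⁻¹).permMatrix R := by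
    ext k j
    rw [Cm_apply,
      show ((finRotate (n + 1))⁻¹).permMatrix R k j
        = (1 : Matrix (Fin (n + 1)) (Fin (n + 1)) R) ((finRotate (n + 1))⁻¹ k) j from
        by simp [Equiv.Perm.permMatrix, Pi.single_apply, Matrix.one_apply, eq_comm],
      Matrix.one_apply]
    exact if_congr (by rw [Equiv.Perm.inv_eq_iff_eq, finRotate_succ_apply]) rfl rfl
  rw [hC, Matrix.det_permutation, Equiv.Perm.sign_inv, sign_finRotate]
  simp

lemma det_Dlt (hd : 3 ≤ d) : (Dlt R d).det = (-1 : R) ^ (d - 1) := by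
  obtain ⟨n, rfl⟩ : ∃ n, d = n + 1 := ⟨d - 1, by omega⟩
  rw [show Dlt R (n + 1)
      = Matrix.diagonal (fun i : Fin (n + 1) => if i = lst (n + 1) then (1 : R) else -1) from
      rfl,
    Matrix.det_diagonal, Fin.prod_univ_castSucc, lst_eq_last, if_pos rfl, mul_one]
  rw [Finset.prod_congr rfl
    (fun i _ => if_neg (Fin.ne_of_lt (Fin.castSucc_lt_last i)) :
      ∀ i ∈ Finset.univ, (if (Fin.castSucc i : Fin (n + 1)) = Fin.last n then (1:R) else -1) = -1)]
  simp

lemma DltDmDlt (hd : 3 ≤ d) (x : R) (q : Fin d → R) :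
    Dlt R d * Dm x q * Dlt R d = Dm x q := by
  rw [Dm_eq,
    show Dlt R d = Matrix.diagonal (fun i : Fin d => if i = lst d then (1 : R) else -1) from rfl,
    Matrix.diagonal_mul_diagonal, Matrix.diagonal_mul_diagonal]
  apply congrArg Matrix.diagonal
  funext i
  by_cases hi : i = lst d
  · rw [if_pos hi, one_mul, mul_one]
  · rw [if_neg hi]
    ring

lemma key_product (hd : 3 ≤ d) (x : R) (q : Fin d → R) :
    (P1 x q * Em x q) * Wd x q * (Cm R d * (Fm x q * Lm x q)) = Dm x q := by
  rw [FL hd x q, Matrix.mul_assoc (P1 x q) (Em x q) (Wd x q), EW hd x q,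
    ← Matrix.mul_assoc (P1 x q * Mm x q) (Cm R d) (Q2 x q),
    Matrix.mul_assoc (P1 x q) (Mm x q) (Cm R d), MC hd x q, P1N hd x q, NQ hd x q]

end Products

end PW

/-- **Diagonal form of the weight matrix of an undissected edge-weighted `d`-gon.**
Let `d ≥ 3` and let `W` be the `d×d` weight matrix of walks around the undissected
`d`-gon with piece-weight `x` and edge weights `q_1, …, q_d`:
`W i j = (∏_s q_s) * x^(k-1)` for `i ≠ j`, where the product runs over the
`k = (j-i) mod d` edges `e_i, …, e_{j-1}` traversed counterclockwise from `i` to `j`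
(so `W i j = q_i ⋯ q_{j-1} x^(j-i-1)` for `i < j` and
`W i j = q_i ⋯ q_d q_1 ⋯ q_{j-1} x^(d-1-(i-j))` for `i > j`), and `W i i = 0`.
Then over the Laurent polynomial ring `R = ℤ[x^{±1}; q_1^{±1}, …, q_d^{±1}]` there
are `P ∈ GL(d,R)` with `det P = (-1)^(d-1)` and `Q ∈ SL(d,R)` such that
`P * W * Q = diag(q_1, …, q_{d-1}, q_d * ∑_{j=0}^{d-2} (ε x^d)^j)` with
`ε = q_1 ⋯ q_d`. -/
theorem polygon_weight_matrix_diagonal_form (d : ℕ) (hd : 3 ≤ d) [NeZero d]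
    (x : AddMonoidAlgebra ℤ (Option (Fin d) →₀ ℤ))
    (q : Fin d → AddMonoidAlgebra ℤ (Option (Fin d) →₀ ℤ))
    (hx : x = LaurentVar d none) (hq : ∀ s, q s = LaurentVar d (some s))
    (W : Matrix (Fin d) (Fin d) (AddMonoidAlgebra ℤ (Option (Fin d) →₀ ℤ)))
    (hW : ∀ i j : Fin d, W i j =
      if i = j then 0
      else (∏ t : Fin ((j - i).val), q (i + Fin.ofNat d (t : ℕ))) * x ^ ((j - i).val - 1)) :
    ∃ P Q : Matrix (Fin d) (Fin d) (AddMonoidAlgebra ℤ (Option (Fin d) →₀ ℤ)),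
      IsUnit P.det ∧ IsUnit Q.det ∧
      P.det = (-1) ^ (d - 1) ∧ Q.det = 1 ∧
      P * W * Q = Matrix.diagonal (fun i : Fin d =>
        if i.val + 1 < d then q i
        else q i * ∑ j ∈ Finset.range (d - 1), ((∏ s : Fin d, q s) * x ^ d) ^ j) := by
  classical
  have hWd : W = PW.Wd x q := by
    ext i j : 1
    rw [hW, PW.Wd_apply]
    by_cases h : i = j
    · rw [if_pos h, if_pos h]
    · rw [if_neg h, if_neg h, PW.piq]
      exact congrArg (· * _) (Fin.prod_univ_eq_prod_range (fun t => q (i + Fin.ofNat d t)) ((j - i).val))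
  refine ⟨PW.Dlt (AddMonoidAlgebra ℤ (Option (Fin d) →₀ ℤ)) d * (PW.P1 x q * PW.Em x q),
    (PW.Cm (AddMonoidAlgebra ℤ (Option (Fin d) →₀ ℤ)) d * (PW.Fm x q * PW.Lm x q)) * PW.Dlt (AddMonoidAlgebra ℤ (Option (Fin d) →₀ ℤ)) d, ?_, ?_, ?_, ?_, ?_⟩
  case _ =>
    rw [Matrix.det_mul, Matrix.det_mul, PW.det_P1 hd, PW.det_Em hd, PW.det_Dlt hd]
    rw [mul_one, mul_one]
    exact (isUnit_one.neg).pow _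
  case _ =>
    rw [Matrix.det_mul, Matrix.det_mul, Matrix.det_mul, PW.det_Fm hd, PW.det_Lm hd,
      PW.det_Cm hd, PW.det_Dlt hd]
    rw [mul_one, mul_one, ← pow_add]
    rw [Even.neg_one_pow ⟨d - 1, rfl⟩]
    exact isUnit_one
  case _ =>
    rw [Matrix.det_mul, Matrix.det_mul, PW.det_P1 hd, PW.det_Em hd, PW.det_Dlt hd]
    rw [mul_one, mul_one]
  case _ =>
    rw [Matrix.det_mul, Matrix.det_mul, Matrix.det_mul, PW.det_Fm hd, PW.det_Lm hd,
      PW.det_Cm hd, PW.det_Dlt hd]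
    rw [mul_one, mul_one, ← pow_add]
    exact Even.neg_one_pow ⟨d - 1, rfl⟩
  case _ =>
    rw [hWd]
    calc PW.Dlt (AddMonoidAlgebra ℤ (Option (Fin d) →₀ ℤ)) d * (PW.P1 x q * PW.Em x q) * PW.Wd x q
          * ((PW.Cm (AddMonoidAlgebra ℤ (Option (Fin d) →₀ ℤ)) d * (PW.Fm x q * PW.Lm x q)) * PW.Dlt (AddMonoidAlgebra ℤ (Option (Fin d) →₀ ℤ)) d)
        = PW.Dlt (AddMonoidAlgebra ℤ (Option (Fin d) →₀ ℤ)) d * ((PW.P1 x q * PW.Em x q) * PW.Wd x q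
            * (PW.Cm (AddMonoidAlgebra ℤ (Option (Fin d) →₀ ℤ)) d * (PW.Fm x q * PW.Lm x q))) * PW.Dlt (AddMonoidAlgebra ℤ (Option (Fin d) →₀ ℤ)) d := by
          simp only [Matrix.mul_assoc]
      _ = PW.Dlt (AddMonoidAlgebra ℤ (Option (Fin d) →₀ ℤ)) d * PW.Dm x q * PW.Dlt (AddMonoidAlgebra ℤ (Option (Fin d) →₀ ℤ)) d := by rw [PW.key_product hd x q]
      _ = PW.Dm x q := PW.DltDmDlt hd x q
      _ = _ := rfl
end
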